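/- arXiv:2210.08215 — 9 statements merged into one kernel-verified Lean document; each statement's English description precedes it below -/
import Mathlib

section
/- Let V be a finite-dimensional complex vector space, h a Hermitian metric on V and C a non-degenerate symmetric bilinear form on V, and let κ := Ψ_C^{-1} ∘ Ψ_h be the conjugate-linear endomorphism of V determined by C(κ(u), v) = h(v, u) for all u, v ∈ V. Then h is compatible with C if and only if κ is a real structure of V, i.e. κ ∘ κ = id_V. -/
noncomputable section

variable {V : Type*} [AddCommGroup V] [Module ℂ V] [FiniteDimensional ℂ V]

/-- `h` is a Hermitian metric on the complex vector space `V`: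
it is additive and `ℂ`-linear in the first argument, Hermitian-symmetric
(hence conjugate-linear in the second argument), and positive definite. -/
def IsHermitianMetric (h : V → V → ℂ) : Prop :=
  (∀ u v w : V, h (u + v) w = h u w + h v w) ∧
  (∀ (a : ℂ) (u v : V), h (a • u) v = a * h u v) ∧
  (∀ u v : V, h u v = starRingEnd ℂ (h v u)) ∧
  (∀ v : V, v ≠ 0 → 0 < (h v v).re)

/-- `C` is a non-degenerate symmetric `ℂ`-bilinear form on `V`. -/
def IsNondegSymmBilin (C : V → V → ℂ) : Prop :=
  (∀ u v w : V, C (u + v) w = C u w + C v w) ∧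
  (∀ (a : ℂ) (u v : V), C (a • u) v = a * C u v) ∧
  (∀ u v : V, C u v = C v u) ∧
  (∀ v : V, (∀ u : V, C v u = 0) → v = 0)

/-- `Ψ_h : V → V^*`, `Ψ_h(u)(v) = h(v,u)`; it is conjugate-linear in `u`. -/
def PsiH (h : V → V → ℂ) : V → V → ℂ := fun u v => h v u

/-- The dual Hermitian metric `h^∨` on `V^* `:
`h^∨(f,g) = h(Ψ_h⁻¹(g), Ψ_h⁻¹(f))`. -/
def dualMetric (h : V → V → ℂ) : (V → ℂ) → (V → ℂ) → ℂ :=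
  fun f g => h (Function.invFun (PsiH h) g) (Function.invFun (PsiH h) f)

/-- `h` is compatible with the form `C` if `Ψ_C : V → V^*`, `Ψ_C(u) = C(u,·) = C u`,
is isometric with respect to `h` and `h^∨`, i.e. `h^∨(Ψ_C u, Ψ_C v) = h(u,v)`. -/
def Compatible (h C : V → V → ℂ) : Prop :=
  ∀ u v : V, dualMetric h (C u) (C v) = h u v

/-- Let `κ := Ψ_C⁻¹ ∘ Ψ_h` be the conjugate-linear endomorphism of `V` determined by
`C(κ(u), v) = h(v, u)`.  Then `h` is compatible with `C` iff `κ` is a real structure,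
i.e. `κ ∘ κ = id`. -/
theorem compatible_iff_realStructure
    (h C : V → V → ℂ) (hh : IsHermitianMetric h) (hC : IsNondegSymmBilin C)
    (κ : V → V) (hκ : ∀ u v : V, C (κ u) v = h v u) :
    Compatible h C ↔ ∀ v : V, κ (κ v) = v := by
  obtain ⟨hadd, hsmul, hsym, hpos⟩ := hh
  obtain ⟨Cadd, Csmul, Csym, Cnd⟩ := hC
  have hneg : ∀ u v : V, h (-u) v = - h u v := by
    intro u v
    have := hsmul (-1) u v
    simpa using this
  have hinj : ∀ u v : V, (∀ w, h w u = h w v) → u = v := by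
    intro u v huv
    by_contra hne
    have h1 : ∀ w, h u w = h v w := by
      intro w
      have h2 := congrArg (starRingEnd ℂ) (huv w)
      rwa [← hsym, ← hsym] at h2
    have h2 : h (u - v) (u - v) = 0 := by
      rw [sub_eq_add_neg, hadd, hneg, h1, add_neg_cancel]
    have h3 := hpos (u - v) (sub_ne_zero.mpr hne)
    rw [h2] at h3
    simp at h3
  have Cneg : ∀ u v : V, C (-u) v = - C u v := by
    intro u v
    have := Csmul (-1) u v
    simpa using this
  have Cinj : ∀ u v : V, (∀ w, C u w = C v w) → u = v := by
    intro u v huv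
    have h1 : u - v = 0 := by
      apply Cnd
      intro w
      rw [sub_eq_add_neg, Cadd, Cneg, huv, add_neg_cancel]
    exact sub_eq_zero.mp h1
  have κinj : Function.Injective κ := by
    intro u v huv
    apply hinj
    intro w
    rw [← hκ, ← hκ, huv]
  have κadd : ∀ u v : V, κ (u + v) = κ u + κ v := by
    intro u v
    apply Cinj
    intro w
    rw [Cadd, hκ, hκ, hκ, hsym w (u + v), hadd, map_add, ← hsym, ← hsym]
  have κsmul : ∀ (r : ℝ) (u : V), κ (r • u) = r • κ u := by
    intro r u
    apply Cinj
    intro w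
    rw [hκ, ← Complex.coe_smul, ← Complex.coe_smul, Csmul, hκ,
      hsym w ((r : ℂ) • u), hsmul, map_mul, ← hsym]
    simp
  let κL : V →ₗ[ℝ] V := { toFun := κ, map_add' := κadd, map_smul' := κsmul }
  have κsurj : Function.Surjective κ := by
    have : Function.Injective κL := κinj
    exact LinearMap.injective_iff_surjective.mp this
  have ψinj : Function.Injective (PsiH h) := by
    intro u v huv
    apply hinj
    intro w
    exact congrFun huv w
  have invψ : ∀ u : V, Function.invFun (PsiH h) (PsiH h u) = u :=
    Function.leftInverse_invFun ψinj
  have keyC : ∀ u : V, C (κ u) = PsiH h u := by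
    intro u; funext w; exact hκ u w
  have invC : ∀ u : V, Function.invFun (PsiH h) (C (κ u)) = u := by
    intro u; rw [keyC]; exact invψ u
  have keyDual : ∀ u v : V, dualMetric h (C (κ u)) (C (κ v)) = h v u := by
    intro u v
    unfold dualMetric
    rw [invC, invC]
  constructor
  · intro hcomp v
    have hc2 : ∀ a b : V, h (κ a) (κ b) = h b a := by
      intro a b
      have := hcomp (κ a) (κ b)
      rw [keyDual] at this
      exact this.symm
    apply Cinj
    intro w
    obtain ⟨w', rfl⟩ := κsurj w
    rw [hκ, hc2, Csym, hκ]
  · intro hreal u v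
    have h1 : ∀ a b : V, h (κ a) (κ b) = h b a := by
      intro a b
      have h2 : h (κ b) (κ a) = h a b := by
        rw [← hκ, hreal, Csym, hκ]
      rw [hsym, h2, ← hsym]
    calc dualMetric h (C u) (C v)
        = dualMetric h (C (κ (κ u))) (C (κ (κ v))) := by rw [hreal, hreal]
      _ = h (κ v) (κ u) := keyDual (κ u) (κ v)
      _ = h u v := h1 v u
end
end

section
/- Let V be a finite-dimensional complex vector space, h a Hermitian metric and C a non-degenerate symmetric bilinear form on V, and suppose h is compatible with C. Let κ := Ψ_C^{-1} ∘ Ψ_h and V_ℝ := {v ∈ V : κ(v) = v}. Then V_ℝ is a real subspace of V which is a real form of V, i.e. the natural ℂ-linear map ℂ ⊗_ℝ V_ℝ → V is an isomorphism; the restrictions of C and of h to V_ℝ coincide, and this common restriction is a positive-definite real-valued symmetric bilinear form on V_ℝ. -/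
noncomputable section

variable {V : Type*} [AddCommGroup V] [Module ℂ V] [FiniteDimensional ℂ V]

/-- Suppose `h` is compatible with `C`, with real structure `κ := Ψ_C⁻¹ ∘ Ψ_h`
determined by `C(κ(u),v) = h(v,u)`, and let `V_ℝ := {v | κ v = v}`.  Then `V_ℝ` is a
real subspace of `V`; it is a real form of `V`, i.e. the natural map
`ℂ ⊗_ℝ V_ℝ → V` is an isomorphism (equivalently, every `w ∈ V` is uniquely
`w = x + i•y` with `x, y ∈ V_ℝ`); the restrictions of `C` and `h` to `V_ℝ` coincide,
and the common restriction is a real-valued positive-definite symmetric form. -/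
theorem realForm_of_compatible
    (h C : V → V → ℂ) (hh : IsHermitianMetric h) (hC : IsNondegSymmBilin C)
    (hcompat : Compatible h C)
    (κ : V → V) (hκ : ∀ u v : V, C (κ u) v = h v u) :
    (0 : V) ∈ {v : V | κ v = v} ∧
    (∀ u ∈ {v : V | κ v = v}, ∀ w ∈ {v : V | κ v = v}, u + w ∈ {v : V | κ v = v}) ∧
    (∀ (r : ℝ), ∀ u ∈ {v : V | κ v = v}, (r : ℂ) • u ∈ {v : V | κ v = v}) ∧
    (∀ w : V, ∃! p : V × V,
      p.1 ∈ {v : V | κ v = v} ∧ p.2 ∈ {v : V | κ v = v} ∧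
        w = p.1 + Complex.I • p.2) ∧
    (∀ u ∈ {v : V | κ v = v}, ∀ w ∈ {v : V | κ v = v},
      C u w = h u w ∧ (C u w).im = 0) ∧
    (∀ u ∈ {v : V | κ v = v}, u ≠ 0 → 0 < (C u u).re) := by
  
  obtain ⟨h_add, h_smul, h_conj, h_pos⟩ := hh
  obtain ⟨C_add, C_smul, C_symm, C_nondeg⟩ := hC
  -- derived facts about h
  have h_add2 : ∀ u v w : V, h u (v + w) = h u v + h u w := by
    intro u v w
    rw [h_conj u (v + w), h_add, map_add, ← h_conj, ← h_conj]
  have h_smul2 : ∀ (a : ℂ) (u v : V), h u (a • v) = starRingEnd ℂ a * h u v := by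
    intro a u v
    rw [h_conj u (a • v), h_smul, map_mul, ← h_conj]
  have h_sub2 : ∀ u v w : V, h u (v - w) = h u v - h u w := by
    intro u v w
    have : v - w = v + (-1 : ℂ) • w := by
      rw [neg_one_smul]; abel
    rw [this, h_add2, h_smul2]
    simp [sub_eq_add_neg]
  have h_nondeg : ∀ u : V, (∀ v : V, h v u = 0) → u = 0 := by
    intro u hu
    by_contra hne
    have := h_pos u hne
    rw [hu u] at this
    simp at this
  -- derived facts about C
  have C_smul2 : ∀ (a : ℂ) (u v : V), C u (a • v) = a * C u v := by
    intro a u v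
    rw [C_symm, C_smul, C_symm]
  have C_add2 : ∀ u v w : V, C u (v + w) = C u v + C u w := by
    intro u v w
    rw [C_symm, C_add, C_symm w, C_symm v]
  have C_ext : ∀ x y : V, (∀ v : V, C x v = C y v) → x = y := by
    intro x y hxy
    have : x - y = 0 := by
      apply C_nondeg
      intro v
      have hs : x - y = x + (-1 : ℂ) • y := by rw [neg_one_smul]; abel
      rw [hs, C_add, C_smul, hxy v]
      ring
    exact sub_eq_zero.mp this
  -- κ is conjugate-linear
  have κ_add : ∀ u w : V, κ (u + w) = κ u + κ w := by
    intro u w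
    apply C_ext
    intro v
    rw [hκ, h_add2, C_add, hκ, hκ]
  have κ_smul : ∀ (a : ℂ) (u : V), κ (a • u) = (starRingEnd ℂ a) • κ u := by
    intro a u
    apply C_ext
    intro v
    rw [hκ, h_smul2, C_smul, hκ]
  have κ_zero : κ 0 = 0 := by
    have := κ_add 0 0
    rw [add_zero] at this
    exact left_eq_add.mp this
  have κ_sub : ∀ u w : V, κ (u - w) = κ u - κ w := by
    intro u w
    have hs : u - w = u + (-1 : ℂ) • w := by rw [neg_one_smul]; abel
    rw [hs, κ_add, κ_smul]
    simp [sub_eq_add_neg]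
  -- κ is injective
  have κ_inj : Function.Injective κ := by
    intro u w huw
    have : ∀ v : V, h v (u - w) = 0 := by
      intro v
      rw [h_sub2, ← hκ u v, ← hκ w v, huw, sub_self]
    have := h_nondeg _ this
    exact sub_eq_zero.mp this
  -- κ as an ℝ-linear map, hence surjective
  let κL : V →ₗ[ℝ] V :=
    { toFun := κ
      map_add' := κ_add
      map_smul' := by
        intro r u
        simp only [RingHom.id_apply]
        rw [← algebraMap_smul ℂ r u, ← algebraMap_smul ℂ r (κ u)]
        simp only [Complex.coe_algebraMap]
        rw [κ_smul]
        congr 1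
        simp [Complex.conj_ofReal] }
  have κ_surj : Function.Surjective κ :=
    (LinearMap.injective_iff_surjective (f := κL)).mp κ_inj
  -- PsiH h is injective
  have psi_inj : Function.Injective (PsiH h) := by
    intro u w huw
    have : ∀ v : V, h v (u - w) = 0 := by
      intro v
      have := congrFun huw v
      simp only [PsiH] at this
      rw [h_sub2, this, sub_self]
    exact sub_eq_zero.mp (h_nondeg _ this)
  -- key identity from compatibility : h (κ u) (κ v) = h v u
  have key : ∀ u v : V, h (κ u) (κ v) = h v u := by
    intro u v
    have e : ∀ x : V, C (κ x) = PsiH h x := by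
      intro x
      funext z
      exact hκ x z
    have := hcompat (κ u) (κ v)
    rw [e u, e v] at this
    unfold dualMetric at this
    rw [Function.leftInverse_invFun psi_inj u, Function.leftInverse_invFun psi_inj v] at this
    exact this.symm
  -- κ is an involution
  have κ_invol : ∀ u : V, κ (κ u) = u := by
    intro u
    apply C_ext
    intro v
    obtain ⟨w, rfl⟩ := κ_surj v
    rw [hκ, key w u, C_symm u (κ w), hκ]
  refine ⟨κ_zero, ?_, ?_, ?_, ?_, ?_⟩
  · intro u hu w hw
    simp only [Set.mem_setOf_eq] at *
    rw [κ_add, hu, hw]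
  · intro r u hu
    simp only [Set.mem_setOf_eq] at *
    rw [κ_smul, hu]
    congr 1
    simp [Complex.conj_ofReal]
  · -- unique decomposition
    intro w
    have conj_half : starRingEnd ℂ (1/2 : ℂ) = 1/2 := by
      rw [show (1/2 : ℂ) = ((1/2 : ℝ) : ℂ) by norm_num, Complex.conj_ofReal]
    have conj_I2 : starRingEnd ℂ (Complex.I/2 : ℂ) = -(Complex.I/2) := by
      rw [map_div₀, Complex.conj_I,
        show starRingEnd ℂ (2 : ℂ) = 2 by
          rw [show (2 : ℂ) = ((2 : ℝ) : ℂ) by norm_num, Complex.conj_ofReal]]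
      ring
    refine ⟨⟨(1/2 : ℂ) • (w + κ w), (Complex.I/2) • (κ w - w)⟩, ⟨?_, ?_, ?_⟩, ?_⟩
    · simp only [Set.mem_setOf_eq]
      rw [κ_smul, κ_add, κ_invol, conj_half]
      congr 1
      abel
    · simp only [Set.mem_setOf_eq]
      rw [κ_smul, κ_sub, κ_invol, conj_I2, neg_smul, ← smul_neg]
      congr 1
      abel
    · show w = (1/2 : ℂ) • (w + κ w) + Complex.I • ((Complex.I/2) • (κ w - w))
      have hI : Complex.I • ((Complex.I/2 : ℂ) • (κ w - w)) = (-(1/2) : ℂ) • (κ w - w) := by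
        rw [smul_smul]
        congr 1
        linear_combination Complex.I_mul_I / 2
      rw [hI]
      module
    · rintro ⟨x, y⟩ ⟨hx, hy, hxy⟩
      simp only [Set.mem_setOf_eq] at hx hy
      simp only at hxy
      have h1 : κ w = x - Complex.I • y := by
        rw [hxy, κ_add, κ_smul, hx, hy, Complex.conj_I, neg_smul, sub_eq_add_neg]
      have hx' : x = (1/2 : ℂ) • (w + κ w) := by
        rw [h1, hxy]
        module
      have h2 : Complex.I • y = (1/2 : ℂ) • (w - κ w) := by
        rw [h1, hxy]
        module
      have h3 := congrArg (fun z => (-Complex.I) • z) h2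
      simp only [smul_smul] at h3
      rw [show (-Complex.I * Complex.I) = (1:ℂ) by linear_combination -Complex.I_mul_I,
        one_smul] at h3
      have hy' : y = (Complex.I/2) • (κ w - w) := by
        rw [h3]
        module
      exact Prod.ext hx' hy'
  · intro u hu w hw
    simp only [Set.mem_setOf_eq] at hu hw
    have hCh : C u w = h u w :=
      calc C u w = C (κ w) u := by rw [hw, C_symm]
        _ = h u w := hκ w u
    have h2 : C w u = h w u :=
      calc C w u = C (κ u) w := by rw [hu, C_symm]
        _ = h w u := hκ u w
    refine ⟨hCh, ?_⟩
    have hconj : C u w = starRingEnd ℂ (C u w) :=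
      calc C u w = h u w := hCh
        _ = starRingEnd ℂ (h w u) := h_conj u w
        _ = starRingEnd ℂ (C w u) := by rw [h2]
        _ = starRingEnd ℂ (C u w) := by rw [C_symm w u]
    have him := congrArg Complex.im hconj
    simp only [Complex.conj_im] at him
    linarith
  · intro u hu hne
    simp only [Set.mem_setOf_eq] at hu
    have : C u u = h u u :=
      calc C u u = C (κ u) u := by rw [hu]
        _ = h u u := hκ u u
    rw [this]
    exact h_pos u hne
end
end

section
/- Let V be a finite-dimensional complex vector space, h a Hermitian metric and C a non-degenerate symmetric bilinear form on V. Then h is compatible with C if and only if there exists a basis (e_1, …, e_n) of V which is orthonormal with respect to both h and C, i.e. h(e_i, e_j) = δ_{ij} and C(e_i, e_j) = δ_{ij} for all i, j. -/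
/-!
Through the inner product `⟪x, y⟫ = h y x`, the Riesz representation turns `C` into a
conjugate-linear map `T` with `⟪T u, y⟫ = C u y`, and compatibility says exactly that
`T` is antiunitary, `⟪T u, T v⟫ = ⟪v, u⟫`; symmetry of `C` then forces `T² = 1`.
On the real subspace of fixed points of `T` the inner product is real, so a real orthonormal
basis of it is `h`-orthonormal, and it spans `V` over `ℂ` because
`v = (v + T v) / 2 + i · (i (T v - v) / 2)` with both summands fixed; on fixed vectors
`C x y = ⟪T x, y⟫ = ⟪x, y⟫`. Conversely `T` fixes a biorthonormal basis, which makes the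
two sesquilinear forms `⟪T u, T v⟫` and `⟪v, u⟫` agree.
-/

noncomputable section

variable {V : Type*} [AddCommGroup V] [Module ℂ V] [FiniteDimensional ℂ V]

open scoped InnerProductSpace ComplexConjugate
open Module

section Conjugation

variable {E : Type*} [NormedAddCommGroup E] [InnerProductSpace ℂ E]

def IsAntiunitary (T : E →ₗ⋆[ℂ] E) : Prop :=
  ∀ u v, ⟪T u, T v⟫_ℂ = ⟪v, u⟫_ℂ

def fixedRealSubmodule (T : E →ₗ⋆[ℂ] E) : Submodule ℝ E where
  carrier := {v | T v = v}
  add_mem' {u v} hu hv := by simp_all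
  zero_mem' := map_zero T
  smul_mem' r v hv := by simp_all [← Complex.coe_smul]

variable {T : E →ₗ⋆[ℂ] E}

theorem mem_fixedRealSubmodule {v : E} : v ∈ fixedRealSubmodule T ↔ T v = v := Iff.rfl

attribute [local instance] InnerProductSpace.complexToReal

theorem IsAntiunitary.inner_eq_real_inner (hT : IsAntiunitary T) {x y : E}
    (hx : x ∈ fixedRealSubmodule T) (hy : y ∈ fixedRealSubmodule T) :
    ⟪x, y⟫_ℂ = (⟪x, y⟫_ℝ : ℂ) := by
  have hconj : conj ⟪x, y⟫_ℂ = ⟪x, y⟫_ℂ := by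
    rw [inner_conj_symm, ← hT, hx, hy]
  rw [real_inner_eq_re_inner ℂ]
  exact (Complex.conj_eq_iff_re.mp hconj).symm

theorem mem_span_fixedRealSubmodule (hinv : ∀ u, T (T u) = u) (v : E) :
    v ∈ Submodule.span ℂ (fixedRealSubmodule T : Set E) := by
  set a : E := (2⁻¹ : ℂ) • (v + T v)
  set b : E := (Complex.I / 2) • (T v - v)
  have ha : a ∈ fixedRealSubmodule T := by
    simp [a, mem_fixedRealSubmodule, hinv, map_ofNat, add_comm]
  have hb : b ∈ fixedRealSubmodule T := by
    simp only [b, mem_fixedRealSubmodule, LinearMap.map_smulₛₗ, map_div₀, Complex.conj_I,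
      map_ofNat, map_sub, hinv]
    module
  have hv : v = a + Complex.I • b := by
    have hI : Complex.I * (Complex.I / 2) = -2⁻¹ := by
      rw [mul_div_assoc', Complex.I_mul_I]; ring
    simp only [a, b, smul_smul, hI]
    module
  rw [hv]
  exact add_mem (Submodule.subset_span ha) (Submodule.smul_mem _ _ (Submodule.subset_span hb))

theorem IsAntiunitary.exists_orthonormalBasis_forall_apply_eq_self [FiniteDimensional ℂ E]
    (hT : IsAntiunitary T) (hinv : ∀ u, T (T u) = u) :
    ∃ b : OrthonormalBasis (Fin (finrank ℂ E)) ℂ E, ∀ i, T (b i) = b i := by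
  set W := fixedRealSubmodule T
  let e := stdOrthonormalBasis ℝ W
  have hon : Orthonormal ℂ (fun i => (e i : E)) := by
    rw [orthonormal_iff_ite]
    intro i j
    rw [hT.inner_eq_real_inner (e i).2 (e j).2, ← Submodule.coe_inner, e.inner_eq_ite]
    split_ifs <;> simp
  have hW : (W : Set E) ⊆ Submodule.span ℂ (Set.range fun i => (e i : E)) := by
    intro w hw
    rw [show w = ((⟨w, hw⟩ : W) : E) from rfl, ← e.sum_repr ⟨w, hw⟩, Submodule.coe_sum]
    exact Submodule.sum_mem _ fun i _ =>
      Submodule.smul_of_tower_mem _ _ (Submodule.subset_span ⟨i, rfl⟩)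
  have hspan : ⊤ ≤ Submodule.span ℂ (Set.range fun i => (e i : E)) := fun v _ =>
    Submodule.span_le.mpr hW (mem_span_fixedRealSubmodule hinv v)
  let b := OrthonormalBasis.mk hon hspan
  have hcard : finrank ℝ W = finrank ℂ E :=
    ((finrank_eq_card_basis b.toBasis).trans (Fintype.card_fin _)).symm
  refine ⟨b.reindex (finCongr hcard), fun i => ?_⟩
  rw [b.reindex_apply, OrthonormalBasis.coe_mk]
  exact (e _).2

end Conjugation

section Riesz

variable {E : Type*} [NormedAddCommGroup E] [InnerProductSpace ℂ E] [FiniteDimensional ℂ E]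

def rieszConj (B : LinearMap.BilinForm ℂ E) : E →ₗ⋆[ℂ] E :=
  (InnerProductSpace.toDual ℂ E).symm.toLinearEquiv.toLinearMap ∘ₛₗ
    (LinearMap.toContinuousLinearMap.toLinearMap ∘ₗ B)

variable {B : LinearMap.BilinForm ℂ E}

theorem inner_rieszConj_left (u y : E) : ⟪rieszConj B u, y⟫_ℂ = B u y :=
  InnerProductSpace.toDual_symm_apply

theorem inner_rieszConj_left_of_apply_eq_self (hB : B.IsSymm) {x : E}
    (hx : rieszConj B x = x) (u : E) : ⟪rieszConj B u, x⟫_ℂ = ⟪x, u⟫_ℂ := by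
  rw [inner_rieszConj_left, hB.eq, ← inner_rieszConj_left, hx]

theorem IsAntiunitary.rieszConj_rieszConj (hB : B.IsSymm) (hT : IsAntiunitary (rieszConj B))
    (u : E) : rieszConj B (rieszConj B u) = u :=
  ext_inner_right ℂ fun y => by
    rw [inner_rieszConj_left, hB.eq, ← inner_rieszConj_left, hT]

theorem isAntiunitary_rieszConj_iff (hB : B.IsSymm) :
    IsAntiunitary (rieszConj B) ↔ ∃ b : OrthonormalBasis (Fin (finrank ℂ E)) ℂ E,
      ∀ i j, B (b i) (b j) = if i = j then 1 else 0 := by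
  constructor
  · intro hT
    obtain ⟨b, hb⟩ := hT.exists_orthonormalBasis_forall_apply_eq_self (hT.rieszConj_rieszConj hB)
    refine ⟨b, fun i j => ?_⟩
    rw [← inner_rieszConj_left, hb, b.inner_eq_ite]
  · rintro ⟨b, hb⟩ u v
    have hfix : ∀ i, rieszConj B (b i) = b i := fun i =>
      InnerProductSpace.ext_inner_right_basis b.toBasis fun j => by
        simp only [inner_rieszConj_left, hb, OrthonormalBasis.coe_toBasis, b.inner_eq_ite]
    calc ⟪rieszConj B u, rieszConj B v⟫_ℂ
        = ∑ i, ⟪rieszConj B u, b i⟫_ℂ * ⟪b i, rieszConj B v⟫_ℂ := (b.sum_inner_mul_inner _ _).symm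
      _ = ∑ i, ⟪v, b i⟫_ℂ * ⟪b i, u⟫_ℂ := by
        refine Finset.sum_congr rfl fun i _ => ?_
        rw [← inner_conj_symm (b i), inner_rieszConj_left_of_apply_eq_self hB (hfix i),
          inner_rieszConj_left_of_apply_eq_self hB (hfix i), inner_conj_symm, mul_comm]
      _ = ⟪v, u⟫_ℂ := b.sum_inner_mul_inner v u

theorem invFun_psiH_inner (u : E) :
    Function.invFun (PsiH fun x y => ⟪y, x⟫_ℂ) (fun v => B u v) = rieszConj B u := by
  have hinj : Function.Injective (PsiH fun x y : E => ⟪y, x⟫_ℂ) := fun w w' hw =>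
    ext_inner_right ℂ fun y => congrFun hw y
  have hpsi : PsiH (fun x y => ⟪y, x⟫_ℂ) (rieszConj B u) = fun v => B u v :=
    funext (inner_rieszConj_left u)
  rw [← hpsi, Function.leftInverse_invFun hinj]

theorem compatible_inner_iff_isAntiunitary :
    Compatible (fun x y : E => ⟪y, x⟫_ℂ) (fun u v => B u v) ↔ IsAntiunitary (rieszConj B) := by
  simp only [Compatible, dualMetric, invFun_psiH_inner, IsAntiunitary]

end Riesz

section HermitianMetric

variable {E : Type*} [AddCommGroup E] [Module ℂ E]

abbrev IsHermitianMetric.innerProductCore {h : E → E → ℂ} (hh : IsHermitianMetric h) :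
    InnerProductSpace.Core ℂ E where
  inner x y := h y x
  conj_inner_symm x y := (hh.2.2.1 y x).symm
  re_inner_nonneg x := by
    obtain ⟨-, hsmul, -, hpos⟩ := hh
    rcases eq_or_ne x 0 with rfl | hx
    · have h00 : h 0 0 = 0 := by simpa using hsmul 0 0 0
      simp [h00]
    · exact (hpos x hx).le
  add_left x y z := by
    obtain ⟨hadd, -, hconj, -⟩ := hh
    rw [hconj z, hadd, map_add, ← hconj, ← hconj]
  smul_left x y r := by
    obtain ⟨-, hsmul, hconj, -⟩ := hh
    rw [hconj y, hsmul, map_mul, ← hconj]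
  definite x hx := by
    by_contra hne
    simpa [hx] using hh.2.2.2 x hne

def IsNondegSymmBilin.toBilinForm {C : E → E → ℂ} (hC : IsNondegSymmBilin C) :
    LinearMap.BilinForm ℂ E :=
  LinearMap.mk₂ ℂ C hC.1 hC.2.1
    (fun u v w => by simp only [hC.2.2.1 u, hC.1])
    (fun a u v => by simp only [hC.2.2.1 u, hC.2.1, smul_eq_mul])

theorem IsNondegSymmBilin.isSymm_toBilinForm {C : E → E → ℂ} (hC : IsNondegSymmBilin C) :
    hC.toBilinForm.IsSymm :=
  ⟨hC.2.2.1⟩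

end HermitianMetric

/-- `h` is compatible with `C` iff there exists a basis of `V` which is orthonormal
with respect to both `h` and `C`. -/
theorem compatible_iff_exists_biorthonormal_basis
    (h C : V → V → ℂ) (hh : IsHermitianMetric h) (hC : IsNondegSymmBilin C) :
    Compatible h C ↔
      ∃ e : Module.Basis (Fin (Module.finrank ℂ V)) ℂ V,
        ∀ i j, h (e i) (e j) = (if i = j then 1 else 0) ∧
               C (e i) (e j) = (if i = j then 1 else 0) := by
  let core := hh.innerProductCore
  let _ : NormedAddCommGroup V := core.toNormedAddCommGroup
  let _ : InnerProductSpace ℂ V := InnerProductSpace.ofCore core.toCore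
  have hinner : ∀ x y : V, h x y = ⟪y, x⟫_ℂ := fun _ _ => rfl
  refine (compatible_inner_iff_isAntiunitary (B := hC.toBilinForm)).trans
    ((isAntiunitary_rieszConj_iff hC.isSymm_toBilinForm).trans ⟨?_, ?_⟩)
  · rintro ⟨b, hb⟩
    refine ⟨b.toBasis, fun i j => ⟨?_, ?_⟩⟩
    · simp only [OrthonormalBasis.coe_toBasis, hinner, b.inner_eq_ite, eq_comm]
    · exact hb i j
  · rintro ⟨e, he⟩
    have hon : Orthonormal ℂ e := orthonormal_iff_ite.mpr fun i j => by
      rw [← hinner, (he j i).1]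
      simp only [@eq_comm _ j i]
    exact ⟨e.toOrthonormalBasis hon, fun i j => by
      rw [Module.Basis.coe_toOrthonormalBasis]
      exact (he i j).2⟩
end
end

section
/- Let H be a positive-definite Hermitian n×n complex matrix satisfying H · Hᵀ = I_n, and let S be the unique positive-semidefinite Hermitian square root of H (so S² = H). Then S also satisfies S · Sᵀ = I_n. -/
open Matrix
open scoped ComplexOrder

/-!
`S⁻¹` and `Sᵀ` are both positive semidefinite, and both square to `H⁻¹ = Hᵀ`; by uniqueness of
positive semidefinite square roots they coincide, so `S * Sᵀ = S * S⁻¹ = 1`.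
-/

namespace Matrix.PosSemidef

variable {𝕜 n : Type*} [RCLike 𝕜] [Fintype n] [DecidableEq n]

theorem eq_of_sq_eq_sq {A B : Matrix n n 𝕜} (hA : A.PosSemidef) (hB : B.PosSemidef)
    (h : A ^ 2 = B ^ 2) : A = B := by
  open scoped MatrixOrder in exact (CFC.sq_eq_sq_iff A B hA.nonneg hB.nonneg).mp h

theorem transpose_eq_inv_of_sq_mul_transpose_eq_one {S : Matrix n n 𝕜} (hS : S.PosSemidef)
    (h : S ^ 2 * (S ^ 2)ᵀ = 1) : Sᵀ = S⁻¹ :=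
  hS.transpose.eq_of_sq_eq_sq hS.inv <| by
    rw [← transpose_pow, ← inv_eq_right_inv h, inv_pow']

theorem mul_transpose_eq_one_of_sq {S : Matrix n n 𝕜} (hS : S.PosSemidef)
    (h : S ^ 2 * (S ^ 2)ᵀ = 1) : S * Sᵀ = 1 := by
  have hdet : IsUnit S.det := by
    rw [sq, Matrix.mul_assoc] at h
    exact isUnit_det_of_right_inverse h
  rw [hS.transpose_eq_inv_of_sq_mul_transpose_eq_one h, mul_nonsing_inv S hdet]

end Matrix.PosSemidef

theorem sqrt_orthogonal_of_posDef_orthogonal_general (n : ℕ) (H S : Matrix (Fin n) (Fin n) ℂ)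
    (hHt : H * Hᵀ = 1)
    (hS : S.PosSemidef) (hSsq : S * S = H) : S * Sᵀ = 1 :=
  hS.mul_transpose_eq_one_of_sq (by rwa [sq, hSsq])

/-- Let `H` be a positive-definite Hermitian complex matrix with `H * Hᵀ = 1`, and
let `S` be the (unique) positive-semidefinite Hermitian square root of `H`, so
`S * S = H`.  Then `S * Sᵀ = 1` as well. -/
theorem sqrt_orthogonal_of_posDef_orthogonal (n : ℕ) (H S : Matrix (Fin n) (Fin n) ℂ)
    (hH : H.PosDef) (hHt : H * Hᵀ = 1)
    (hS : S.PosSemidef) (hSsq : S * S = H) : S * Sᵀ = 1 :=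
  sqrt_orthogonal_of_posDef_orthogonal_general n H S hHt hS hSsq
end

section
/- Let V be a finite-dimensional complex vector space with a non-degenerate symmetric ℂ-bilinear form C, and let F be a regular semisimple endomorphism of V symmetric with respect to C, with eigen decomposition V = ⊕_α V_α into one-dimensional eigenspaces. Then there exists a unique Hermitian metric h^{can} on V such that (i) h^{can} is compatible with C, and (ii) the decomposition V = ⊕_α V_α is orthogonal with respect to h^{can}. -/
/-! In an eigenbasis `e` of `F` the symmetry of `F` forces `C` to be diagonal,
`C(u, v) = ∑ uᵢ vᵢ cᵢ` with all `cᵢ ≠ 0`, and orthogonality of the eigenlines forces a Hermitian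
metric to be diagonal, `h(u, v) = ∑ uᵢ v̄ᵢ ρᵢ` with `ρᵢ > 0`. For such an `h`,
`Ψ_h⁻¹(C u)` has coordinates `conj (uᵢ cᵢ) / ρᵢ`, so `h^∨` pulls back along `Ψ_C` to the diagonal
metric with weights `|cᵢ|² / ρᵢ`. Compatibility therefore reads `ρᵢ² = |cᵢ|²`, whose only
positive solution is `ρᵢ = |cᵢ|`. -/

open ComplexConjugate

section CanonicalMetric

variable {V : Type*} [AddCommGroup V] [Module ℂ V] {ι : Type*} [Fintype ι]

lemma apply_eq_sum_repr_mul (f : V → ℂ) (hadd : ∀ u v, f (u + v) = f u + f v)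
    (hsmul : ∀ (a : ℂ) u, f (a • u) = a * f u) (e : Module.Basis ι ℂ V) (u : V) :
    f u = ∑ i, e.repr u i * f (e i) := by
  let L : V →ₗ[ℂ] ℂ := IsLinearMap.mk' f ⟨hadd, hsmul⟩
  have hL : ∀ w, L w = f w := fun _ => rfl
  conv_lhs => rw [← e.sum_repr u, ← hL, map_sum]
  exact Finset.sum_congr rfl fun i _ => hsmul _ _

lemma apply_basis_eq_repr_mul_of_orthogonal (B : V → V → ℂ)
    (hadd : ∀ u v w, B (u + v) w = B u w + B v w) (hsmul : ∀ (a : ℂ) u v, B (a • u) v = a * B u v)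
    (e : Module.Basis ι ℂ V) (horth : ∀ i j, i ≠ j → B (e i) (e j) = 0) (v : V) (i : ι) :
    B v (e i) = e.repr v i * B (e i) (e i) := by
  rw [apply_eq_sum_repr_mul (B · (e i)) (hadd · · _) (hsmul · · _) e v]
  exact Finset.sum_eq_single i (fun j _ hji => by rw [horth j i hji, mul_zero])
    (fun hi => absurd (Finset.mem_univ i) hi)

namespace IsNondegSymmBilin

variable {C : V → V → ℂ}

lemma eq_zero_of_eigenvectors (hC : IsNondegSymmBilin C) {F : V →ₗ[ℂ] V}
    (hsymm : ∀ u v, C (F u) v = C u (F v)) {β γ : ℂ} (hβγ : β ≠ γ) {u v : V}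
    (hu : F u = β • u) (hv : F v = γ • v) : C u v = 0 := by
  have h := hsymm u v
  rw [hu, hv, hC.2.1, hC.2.2.1 u (γ • v), hC.2.1, hC.2.2.1 v u] at h
  exact (mul_eq_mul_right_iff.mp h).resolve_left hβγ

lemma eq_sum_of_orthogonal (hC : IsNondegSymmBilin C) (e : Module.Basis ι ℂ V)
    (horth : ∀ i j, i ≠ j → C (e i) (e j) = 0) (u v : V) :
    C u v = ∑ i, e.repr u i * e.repr v i * C (e i) (e i) := by
  obtain ⟨hadd, hsmul, hsymm, -⟩ := hC
  rw [apply_eq_sum_repr_mul (C · v) (hadd · · v) (hsmul · · v) e u]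
  refine Finset.sum_congr rfl fun i _ => ?_
  rw [hsymm, apply_basis_eq_repr_mul_of_orthogonal C hadd hsmul e horth, mul_assoc]

lemma apply_basis_self_ne_zero (hC : IsNondegSymmBilin C) (e : Module.Basis ι ℂ V)
    (horth : ∀ i j, i ≠ j → C (e i) (e j) = 0) (i : ι) : C (e i) (e i) ≠ 0 := by
  intro hi
  refine e.ne_zero i (hC.2.2.2 _ fun u => ?_)
  rw [hC.2.2.1, apply_basis_eq_repr_mul_of_orthogonal C hC.1 hC.2.1 e horth, hi, mul_zero]

end IsNondegSymmBilin

lemma repr_apply_eq_mul_of_apply_basis {F : V →ₗ[ℂ] V} {e : Module.Basis ι ℂ V} {α : ι → ℂ}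
    (hFe : ∀ i, F (e i) = α i • e i) (u : V) (i : ι) :
    e.repr (F u) i = α i * e.repr u i := by
  have hFu : F u = ∑ j, (α j * e.repr u j) • e j := by
    conv_lhs => rw [← e.sum_repr u, map_sum]
    exact Finset.sum_congr rfl fun j _ => by rw [map_smul, hFe, smul_smul, mul_comm]
  rw [hFu, e.repr_sum_self]

lemma repr_eq_zero_of_apply_eq_smul {F : V →ₗ[ℂ] V} {e : Module.Basis ι ℂ V} {α : ι → ℂ}
    (hFe : ∀ i, F (e i) = α i • e i) {β : ℂ} {u : V} (hu : F u = β • u) {i : ι} (hi : α i ≠ β) :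
    e.repr u i = 0 := by
  have h := repr_apply_eq_mul_of_apply_basis hFe u i
  rw [hu, map_smul, Finsupp.smul_apply, smul_eq_mul] at h
  exact (mul_eq_mul_right_iff.mp h).resolve_left (Ne.symm hi)

lemma IsHermitianMetric.psiH_injective {h : V → V → ℂ} (hh : IsHermitianMetric h) :
    Function.Injective (PsiH h) := by
  obtain ⟨hadd, -, hherm, hpos⟩ := hh
  intro u u' huu
  by_contra hne
  have hsame : h u (u - u') = h u' (u - u') := by
    rw [hherm u, hherm u', show h (u - u') u = h (u - u') u' from congrFun huu (u - u')]
  have hsplit := hadd (u - u') u' (u - u')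
  rw [sub_add_cancel] at hsplit
  have hzero : h (u - u') (u - u') = 0 := by linear_combination hsame - hsplit
  simpa [hzero] using hpos (u - u') (sub_ne_zero.mpr hne)

lemma IsHermitianMetric.dualMetric_psiH {h : V → V → ℂ} (hh : IsHermitianMetric h) (w w' : V) :
    dualMetric h (PsiH h w) (PsiH h w') = h w' w := by
  simp only [dualMetric, Function.leftInverse_invFun hh.psiH_injective _]

noncomputable def diagMetric (e : Module.Basis ι ℂ V) (ρ : ι → ℝ) : V → V → ℂ :=
  fun u v => ∑ i, e.repr u i * conj (e.repr v i) * ρ i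

variable (e : Module.Basis ι ℂ V) {ρ : ι → ℝ}

lemma diagMetric_apply_basis_self (ρ : ι → ℝ) (i : ι) : diagMetric e ρ (e i) (e i) = ρ i := by
  classical
  simp [diagMetric, Finsupp.single_apply]

lemma isHermitianMetric_diagMetric (hρ : ∀ i, 0 < ρ i) : IsHermitianMetric (diagMetric e ρ) := by
  refine ⟨fun u v w => ?_, fun a u v => ?_, fun u v => ?_, fun v hv => ?_⟩
  · simp only [diagMetric, map_add, Finsupp.add_apply, add_mul, Finset.sum_add_distrib]
  · simp only [diagMetric, map_smul, Finsupp.smul_apply, smul_eq_mul, Finset.mul_sum, mul_assoc]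
  · simp only [diagMetric, map_sum, map_mul, Complex.conj_conj, Complex.conj_ofReal]
    exact Finset.sum_congr rfl fun i _ => by ring
  · obtain ⟨i, hi⟩ : ∃ i, e.repr v i ≠ 0 := by
      by_contra! h
      exact hv (e.repr.injective (Finsupp.ext fun i => by simp [h i]))
    have hterm : ∀ j,
        (e.repr v j * conj (e.repr v j) * ρ j).re = Complex.normSq (e.repr v j) * ρ j :=
      fun j => by rw [Complex.mul_conj, ← Complex.ofReal_mul, Complex.ofReal_re]
    simp only [diagMetric, Complex.re_sum, hterm]
    exact Finset.sum_pos' (fun j _ => mul_nonneg (Complex.normSq_nonneg _) (hρ j).le)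
      ⟨i, Finset.mem_univ i, mul_pos (Complex.normSq_pos.mpr hi) (hρ i)⟩

lemma diagMetric_eq_zero_of_eigenvectors {F : V →ₗ[ℂ] V} {α : ι → ℂ}
    (hFe : ∀ i, F (e i) = α i • e i) {β γ : ℂ} (hβγ : β ≠ γ) {u v : V}
    (hu : F u = β • u) (hv : F v = γ • v) : diagMetric e ρ u v = 0 := by
  refine Finset.sum_eq_zero fun i _ => ?_
  by_cases hi : α i = β
  · rw [repr_eq_zero_of_apply_eq_smul hFe hv (hi ▸ hβγ), map_zero, mul_zero, zero_mul]
  · rw [repr_eq_zero_of_apply_eq_smul hFe hu hi, zero_mul, zero_mul]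

lemma IsHermitianMetric.eq_diagMetric {h : V → V → ℂ} (hh : IsHermitianMetric h)
    (horth : ∀ i j, i ≠ j → h (e i) (e j) = 0) :
    h = diagMetric e fun i => (h (e i) (e i)).re := by
  obtain ⟨hadd, hsmul, hherm, -⟩ := hh
  have hreal : ∀ i, ((h (e i) (e i)).re : ℂ) = h (e i) (e i) :=
    fun i => Complex.conj_eq_iff_re.mp (hherm _ _).symm
  funext u v
  rw [apply_eq_sum_repr_mul (h · v) (hadd · · v) (hsmul · · v) e u]
  refine Finset.sum_congr rfl fun i _ => ?_
  rw [hherm, apply_basis_eq_repr_mul_of_orthogonal h hadd hsmul e horth, map_mul, ← hherm,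
    hreal, mul_assoc]

section Compatibility

variable {C : V → V → ℂ} {c : ι → ℂ}

lemma psiH_diagMetric (hC : ∀ u v, C u v = ∑ i, e.repr u i * e.repr v i * c i)
    (hρ : ∀ i, ρ i ≠ 0) (u : V) :
    PsiH (diagMetric e ρ) (∑ i, (conj (e.repr u i * c i) / ρ i) • e i) = C u := by
  funext v
  simp only [PsiH, diagMetric, e.repr_sum_self, hC]
  refine Finset.sum_congr rfl fun i _ => ?_
  have : (ρ i : ℂ) ≠ 0 := Complex.ofReal_ne_zero.mpr (hρ i)
  simp only [map_div₀, map_mul, Complex.conj_conj, Complex.conj_ofReal]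
  field_simp

lemma dualMetric_diagMetric (hC : ∀ u v, C u v = ∑ i, e.repr u i * e.repr v i * c i)
    (hρ : ∀ i, 0 < ρ i) (u v : V) :
    dualMetric (diagMetric e ρ) (C u) (C v) = diagMetric e (fun i => ‖c i‖ ^ 2 / ρ i) u v := by
  have hρ₀ : ∀ i, ρ i ≠ 0 := fun i => (hρ i).ne'
  rw [← psiH_diagMetric e hC hρ₀ u, ← psiH_diagMetric e hC hρ₀ v,
    (isHermitianMetric_diagMetric e hρ).dualMetric_psiH]
  simp only [diagMetric, e.repr_sum_self]
  refine Finset.sum_congr rfl fun i _ => ?_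
  have : (ρ i : ℂ) ≠ 0 := Complex.ofReal_ne_zero.mpr (hρ₀ i)
  simp only [map_div₀, map_mul, Complex.conj_conj, Complex.conj_ofReal]
  push_cast
  rw [← Complex.mul_conj']
  field_simp

lemma compatible_diagMetric_iff (hC : ∀ u v, C u v = ∑ i, e.repr u i * e.repr v i * c i)
    (hρ : ∀ i, 0 < ρ i) :
    Compatible (diagMetric e ρ) C ↔ ∀ i, ρ i = ‖c i‖ := by
  constructor
  · intro hcomp i
    have hi := hcomp (e i) (e i)
    rw [dualMetric_diagMetric e hC hρ, diagMetric_apply_basis_self, diagMetric_apply_basis_self] at hi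
    have hsq : ρ i ^ 2 = ‖c i‖ ^ 2 := by
      have hi' : ‖c i‖ ^ 2 / ρ i = ρ i := by exact_mod_cast hi
      rw [div_eq_iff (hρ i).ne'] at hi'
      rw [hi', sq]
    exact (pow_left_inj₀ (hρ i).le (norm_nonneg _) two_ne_zero).mp hsq
  · intro hρc u v
    rw [dualMetric_diagMetric e hC hρ]
    congr 1
    funext i
    have := (hρ i).ne'
    rw [hρc i] at this ⊢
    field_simp

end Compatibility

end CanonicalMetric

variable {V : Type*} [AddCommGroup V] [Module ℂ V] [FiniteDimensional ℂ V]

/-- Let `F` be a regular semisimple endomorphism of `V` symmetric with respect to the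
non-degenerate symmetric bilinear form `C`.  Then there is a unique Hermitian metric
`h^can` on `V` which is compatible with `C` and for which the eigen decomposition of
`F` is orthogonal. -/
theorem existsUnique_canonical_compatible_metric
    (C : V → V → ℂ) (hC : IsNondegSymmBilin C) (F : V →ₗ[ℂ] V)
    (hsymm : ∀ u v : V, C (F u) v = C u (F v))
    (hreg : ∃ (e : Module.Basis (Fin (Module.finrank ℂ V)) ℂ V)
        (α : Fin (Module.finrank ℂ V) → ℂ),
      Function.Injective α ∧ ∀ i, F (e i) = α i • e i) :
    ∃! h : V → V → ℂ, IsHermitianMetric h ∧ Compatible h C ∧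
      ∀ α β : ℂ, α ≠ β → ∀ u v : V, F u = α • u → F v = β • v → h u v = 0 := by
  obtain ⟨e, α, hα, hFe⟩ := hreg
  have hCorth : ∀ i j, i ≠ j → C (e i) (e j) = 0 := fun i j hij =>
    hC.eq_zero_of_eigenvectors hsymm (hα.ne hij) (hFe i) (hFe j)
  have hCdiag := hC.eq_sum_of_orthogonal e hCorth
  have hnorm_pos : ∀ i, 0 < ‖C (e i) (e i)‖ :=
    fun i => norm_pos_iff.mpr (hC.apply_basis_self_ne_zero e hCorth i)
  refine ⟨diagMetric e fun i => ‖C (e i) (e i)‖, ⟨isHermitianMetric_diagMetric e hnorm_pos,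
      (compatible_diagMetric_iff e hCdiag hnorm_pos).mpr fun _ => rfl,
      fun β γ hβγ u v hu hv => diagMetric_eq_zero_of_eigenvectors e hFe hβγ hu hv⟩, ?_⟩
  rintro h ⟨hh, hcomp, horth⟩
  have hρ : ∀ i, 0 < (h (e i) (e i)).re := fun i => hh.2.2.2 _ (e.ne_zero i)
  rw [hh.eq_diagMetric e fun i j hij => horth _ _ (hα.ne hij) _ _ (hFe i) (hFe j)] at hcomp ⊢
  exact congrArg (diagMetric e) (funext ((compatible_diagMetric_iff e hCdiag hρ).mp hcomp))
end

section
/- Let V be a finite-dimensional complex vector space, C a non-degenerate symmetric bilinear form on V, and h a Hermitian metric on V compatible with C, with real structure κ := Ψ_C^{-1} ∘ Ψ_h. Let h' be another Hermitian metric on V and let s be the unique automorphism of V with h'(u,v) = h(s(u), v) for all u, v (s is self-adjoint with respect to h). Then the following are equivalent: (i) h' is compatible with C; (ii) s is an isometry with respect to C, i.e. C(s(u), s(v)) = C(u,v) for all u, v; (iii) κ ∘ s ∘ κ = s^{-1}. -/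
noncomputable section

variable {V : Type*} [AddCommGroup V] [Module ℂ V] [FiniteDimensional ℂ V]

/-- Let `h` be a Hermitian metric compatible with `C`, with real structure
`κ := Ψ_C⁻¹ ∘ Ψ_h` (so `C(κ u, v) = h(v,u)`).  Let `h'` be another Hermitian metric
and `s := s(h,h')` the unique automorphism with `h'(u,v) = h(s u, v)`.  Then the
following are equivalent: (i) `h'` is compatible with `C`; (ii) `s` is a
`C`-isometry; (iii) `κ ∘ s ∘ κ = s⁻¹`. -/
theorem compatible_iff_s_isometry_iff_kappa_conj
    (h h' C : V → V → ℂ) (hh : IsHermitianMetric h) (hh' : IsHermitianMetric h')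
    (hC : IsNondegSymmBilin C) (hcompat : Compatible h C)
    (κ : V → V) (hκ : ∀ u v : V, C (κ u) v = h v u)
    (s : V ≃ₗ[ℂ] V) (hs : ∀ u v : V, h' u v = h (s u) v) :
    (Compatible h' C ↔ ∀ u v : V, C (s u) (s v) = C u v) ∧
    (Compatible h' C ↔ ∀ v : V, κ (s (κ v)) = s.symm v) := by
  obtain ⟨hadd, hsmul, hsymm, hpos⟩ := hh
  obtain ⟨hadd', hsmul', hsymm', hpos'⟩ := hh'
  obtain ⟨Cadd, Csmul, Csym, Cnd⟩ := hC
  -- basic facts about h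
  have hsub : ∀ u w v : V, h (u - w) v = h u v - h w v := by
    intro u w v
    have h1 : h ((-1 : ℂ) • w) v = -1 * h w v := hsmul (-1) w v
    rw [sub_eq_add_neg, ← neg_one_smul ℂ w, hadd, h1]; ring
  have hext1 : ∀ x y : V, (∀ v : V, h x v = h y v) → x = y := by
    intro x y hxy
    by_contra hne
    have hne' : x - y ≠ 0 := sub_ne_zero.mpr hne
    have := hpos _ hne'
    rw [hsub, hxy, sub_self] at this
    simp at this
  have hext2 : ∀ x y : V, (∀ v : V, h v x = h v y) → x = y := by
    intro x y hxy
    refine hext1 x y fun v => ?_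
    rw [hsymm x v, hsymm y v, hxy v]
  have hsub' : ∀ u w v : V, h' (u - w) v = h' u v - h' w v := by
    intro u w v
    have h1 : h' ((-1 : ℂ) • w) v = -1 * h' w v := hsmul' (-1) w v
    rw [sub_eq_add_neg, ← neg_one_smul ℂ w, hadd', h1]; ring
  have hext1' : ∀ x y : V, (∀ v : V, h' x v = h' y v) → x = y := by
    intro x y hxy
    by_contra hne
    have hne' : x - y ≠ 0 := sub_ne_zero.mpr hne
    have := hpos' _ hne'
    rw [hsub', hxy, sub_self] at this
    simp at this
  have hext2' : ∀ x y : V, (∀ v : V, h' v x = h' v y) → x = y := by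
    intro x y hxy
    refine hext1' x y fun v => ?_
    rw [hsymm' x v, hsymm' y v, hxy v]
  -- C extensionality
  have Cext : ∀ x y : V, (∀ v : V, C x v = C y v) → x = y := by
    intro x y hxy
    have : x - y = 0 := by
      refine Cnd _ fun u => ?_
      have h1 : C ((-1 : ℂ) • y) u = -1 * C y u := Csmul (-1) y u
      rw [show x - y = x + (-1:ℂ) • y by rw [neg_one_smul]; abel, Cadd, h1, hxy u]; ring
    exact sub_eq_zero.mp this
  -- PsiH identities
  have psiHκ : ∀ a : V, C (κ a) = PsiH h a := fun a => funext fun v => hκ a v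
  have psiH_inj : Function.Injective (PsiH h) := by
    intro x y hxy
    exact hext2 x y fun v => congrFun hxy v
  have psiH_inj' : Function.Injective (PsiH h') := by
    intro x y hxy
    exact hext2' x y fun v => congrFun hxy v
  have inv_psiH : ∀ a : V, Function.invFun (PsiH h) (PsiH h a) = a :=
    fun a => Function.leftInverse_invFun psiH_inj a
  have inv_psiH' : ∀ a : V, Function.invFun (PsiH h') (PsiH h' a) = a :=
    fun a => Function.leftInverse_invFun psiH_inj' a
  -- key consequence of compatibility of h
  have E1 : ∀ a b : V, h (κ a) (κ b) = h b a := by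
    intro a b
    have := hcompat (κ a) (κ b)
    rw [psiHκ a, psiHκ b] at this
    unfold dualMetric at this
    rw [inv_psiH, inv_psiH] at this
    exact this.symm
  -- κ is additive, real-linear, injective, surjective
  have κadd : ∀ u v : V, κ (u + v) = κ u + κ v := by
    intro u v
    refine Cext _ _ fun w => ?_
    rw [Cadd, hκ, hκ, hκ, hsymm w (u+v), hadd, map_add, ← hsymm w u, ← hsymm w v]
  have κsmul : ∀ (r : ℝ) (u : V), κ (r • u) = r • κ u := by
    intro r u
    refine Cext _ _ fun w => ?_
    rw [← Complex.coe_smul, ← Complex.coe_smul, Csmul, hκ, hκ,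
      hsymm w ((r:ℂ) • u), hsmul, map_mul, ← hsymm w u]
    simp
  have κinj : Function.Injective κ := by
    intro x y hxy
    refine hext2 x y fun v => ?_
    rw [← hκ x v, ← hκ y v, hxy]
  have κsurj : Function.Surjective κ := by
    let f : V →ₗ[ℝ] V := { toFun := κ, map_add' := κadd, map_smul' := κsmul }
    haveI : FiniteDimensional ℝ V := FiniteDimensional.trans ℝ ℂ V
    exact LinearMap.surjective_of_injective (f := f) κinj
  -- κ is an involution
  have κκ : ∀ u : V, κ (κ u) = u := by
    intro u
    refine Cext _ _ fun v => ?_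
    obtain ⟨b, rfl⟩ := κsurj v
    rw [hκ, E1, ← hκ]
    exact Csym (κ b) u
  -- self-adjointness of s and s.symm
  have sadj : ∀ a b : V, h (s a) b = h a (s b) := by
    intro a b
    rw [← hs a b, hsymm' a b, hs b a]
    exact (hsymm a (s b)).symm
  have sadj' : ∀ a b : V, h (s.symm a) b = h a (s.symm b) := by
    intro a b
    have := sadj (s.symm a) (s.symm b)
    rw [s.apply_symm_apply, s.apply_symm_apply] at this
    exact this.symm
  -- computation of the dual metric of h' on C u
  have psiH'_eq : ∀ x : V, PsiH h' x = PsiH h (s x) := by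
    intro x
    funext v
    show h' v x = h v (s x)
    rw [hsymm' v x, hs x v, ← hsymm v (s x)]
  have CP : ∀ u : V, C u = PsiH h' (s.symm (κ u)) := by
    intro u
    rw [psiH'_eq, s.apply_symm_apply, ← psiHκ, κκ]
  have dual' : ∀ u v : V, dualMetric h' (C u) (C v) = h (κ v) (s.symm (κ u)) := by
    intro u v
    unfold dualMetric
    rw [CP u, CP v, inv_psiH', inv_psiH', hs, s.apply_symm_apply]
  -- key reformulation K
  have compat_iff : Compatible h' C ↔ ∀ u : V, κ (s u) = s.symm (κ u) := by
    have e2 : ∀ u v : V, h (κ v) (s.symm (κ u)) = h (κ (s.symm (κ u))) v := by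
      intro u v
      conv_lhs => rw [← κκ (s.symm (κ u))]
      rw [E1]
    constructor
    · intro hc u
      have e3 : κ (s.symm (κ u)) = s u := by
        refine hext1 _ _ fun v => ?_
        have t := hc u v
        rw [dual', hs] at t
        rw [← e2]
        exact t
      rw [← e3, κκ]
    · intro hK u v
      rw [dual', hs, e2, ← hK u, κκ]
  constructor
  · -- (i) ↔ (ii)
    rw [compat_iff]
    constructor
    · intro hK u v
      have c1 : C (s u) (s v) = h (s v) (κ (s u)) := by
        conv_lhs => rw [← κκ (s u)]
        rw [hκ]
      rw [c1, hK, sadj, s.apply_symm_apply, ← hκ, κκ]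
    · intro hiso u
      refine hext2 _ _ fun v => ?_
      have c1 := hiso u (s.symm v)
      rw [s.apply_symm_apply] at c1
      have c2 : C (s u) v = h v (κ (s u)) := by
        conv_lhs => rw [← κκ (s u)]
        rw [hκ]
      have c3 : C u (s.symm v) = h v (s.symm (κ u)) := by
        conv_lhs => rw [← κκ u]
        rw [hκ, sadj']
      rw [c2, c3] at c1
      exact c1
  · -- (i) ↔ (iii)
    rw [compat_iff]
    constructor
    · intro hK v
      rw [hK, κκ]
    · intro hK u
      have := hK (κ u)
      rw [κκ] at this
      rw [this]
end
end

section
/- Let V be a finite-dimensional complex vector space, C a non-degenerate symmetric bilinear form on V, and h, h' two Hermitian metrics on V both compatible with C, with real structures κ := Ψ_C^{-1} ∘ Ψ_h and κ' := Ψ_C^{-1} ∘ Ψ_{h'}. Let s := s(h,h') be the unique automorphism with h'(u,v) = h(s(u),v), which is positive self-adjoint with respect to h, and let s^{1/2} be its unique positive h-self-adjoint square root. Then: (1) s^{1/2} is an isometry with respect to C, i.e. C(s^{1/2}(u), s^{1/2}(v)) = C(u,v) for all u, v; (2) s^{1/2} ∘ κ' = κ ∘ s^{1/2}; (3) s^{1/2}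 maps the fixed-point set V_{ℝ,κ'} of κ' isomorphically (over ℝ) onto the fixed-point set V_{ℝ,κ} of κ, and this map is an isometry with respect to the restrictions of C. -/
noncomputable section

variable {V : Type*} [AddCommGroup V] [Module ℂ V] [FiniteDimensional ℂ V]

/-! Compatibility makes `κ` a conjugate-linear involution with `h (κ a) (κ b) = h b a`,
and `κ' = κ ∘ s`, so `κ'² = id` reads `κ s κ = s⁻¹`. Hence `t := κ r κ` is a positive
square root of `s⁻¹` commuting with `s`, and `r t r` is a positive square root of `s = r²`.
Uniqueness of positive square roots gives `r t r = r`, i.e. `r κ r = κ`, and all claims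
follow from this identity. -/

theorem Function.Semiconj.bijOn_fixedPoints {α β : Type*} {f : α → β} {ga : α → α}
    {gb : β → β} (h : Function.Semiconj f ga gb) (hf : Function.Bijective f) :
    Set.BijOn f (Function.fixedPoints ga) (Function.fixedPoints gb) := by
  refine ⟨h.mapsTo_fixedPoints, hf.injective.injOn, fun y hy => ?_⟩
  obtain ⟨x, rfl⟩ := hf.surjective y
  exact ⟨x, hf.injective ((h x).trans hy), rfl⟩

theorem isometry_of_apply_conj_apply {E : Type*} {h C : E → E → ℂ} {κ r : E → E}
    (hκ : ∀ u v, C (κ u) v = h v u) (hκκ : Function.Involutive κ)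
    (hr : ∀ u v, h (r u) v = h u (r v)) (hrκr : ∀ v, r (κ (r v)) = κ v) (u v : E) :
    C (r u) (r v) = C u v :=
  calc C (r u) (r v) = C (κ (κ (r u))) (r v) := by rw [hκκ]
    _ = h v (κ u) := by rw [hκ, hr, hrκr]
    _ = C u v := by rw [← hκ, hκκ]

section HermitianForms

variable {E : Type*} [AddCommGroup E] [Module ℂ E] {h h' C : E → E → ℂ}

def IsSymmetricWrt (h : E → E → ℂ) (f : E → E) : Prop :=
  ∀ u v, h (f u) v = h u (f v)

def IsPosDefWrt (h : E → E → ℂ) (f : E → E) : Prop :=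
  IsSymmetricWrt h f ∧ ∀ v, v ≠ 0 → 0 < (h (f v) v).re

namespace IsHermitianMetric

theorem sub_left (hh : IsHermitianMetric h) (u v w : E) : h (u - v) w = h u w - h v w :=
  (AddMonoidHom.mk' (h · w) fun u v => hh.1 u v w).map_sub u v

theorem add_right (hh : IsHermitianMetric h) (u v w : E) : h u (v + w) = h u v + h u w := by
  rw [hh.2.2.1, hh.1, map_add, ← hh.2.2.1, ← hh.2.2.1]

theorem sub_right (hh : IsHermitianMetric h) (u v w : E) : h u (v - w) = h u v - h u w := by
  rw [hh.2.2.1, hh.sub_left, map_sub, ← hh.2.2.1, ← hh.2.2.1]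

theorem smul_right (hh : IsHermitianMetric h) (a : ℂ) (u v : E) :
    h u (a • v) = starRingEnd ℂ a * h u v := by
  rw [hh.2.2.1, hh.2.1, map_mul, ← hh.2.2.1]

theorem eq_zero_of_self_eq_zero (hh : IsHermitianMetric h) {v : E} (hv : h v v = 0) : v = 0 := by
  by_contra hne
  simpa [hv] using hh.2.2.2 v hne

theorem eq_of_forall_left (hh : IsHermitianMetric h) {x y : E} (hxy : ∀ v, h x v = h y v) :
    x = y :=
  sub_eq_zero.mp (hh.eq_zero_of_self_eq_zero (by rw [hh.sub_left, hxy, sub_self]))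

theorem eq_of_forall_right (hh : IsHermitianMetric h) {x y : E} (hxy : ∀ v, h v x = h v y) :
    x = y :=
  hh.eq_of_forall_left fun v => by rw [hh.2.2.1, hxy, ← hh.2.2.1]

theorem isSymmetricWrt_of_apply_eq (hh : IsHermitianMetric h) (hh' : IsHermitianMetric h')
    {s : E → E} (hs : ∀ u v, h' u v = h (s u) v) : IsSymmetricWrt h s := fun u v => by
  rw [← hs, hh'.2.2.1, hs, ← hh.2.2.1]

end IsHermitianMetric

namespace IsNondegSymmBilin

theorem sub_left (hC : IsNondegSymmBilin C) (u v w : E) : C (u - v) w = C u w - C v w :=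
  (AddMonoidHom.mk' (C · w) fun u v => hC.1 u v w).map_sub u v

theorem eq_of_forall_left (hC : IsNondegSymmBilin C) {x y : E} (hxy : ∀ v, C x v = C y v) :
    x = y :=
  sub_eq_zero.mp (hC.2.2.2 _ fun v => by rw [hC.sub_left, hxy, sub_self])

end IsNondegSymmBilin

section RealStructure

variable {κ : E → E}

def realStructure (hC : IsNondegSymmBilin C) (hh : IsHermitianMetric h)
    (hκ : ∀ u v, C (κ u) v = h v u) : E →ₗ⋆[ℂ] E where
  toFun := κ
  map_add' u w := hC.eq_of_forall_left fun v => by rw [hκ, hC.1, hκ, hκ, hh.add_right]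
  map_smul' a u := hC.eq_of_forall_left fun v => by rw [hκ, hh.smul_right, hC.2.1, hκ]

theorem realStructure_injective (hh : IsHermitianMetric h) (hκ : ∀ u v, C (κ u) v = h v u) :
    Function.Injective κ := fun _ _ hxy =>
  hh.eq_of_forall_right fun v => by rw [← hκ, hxy, hκ]

theorem realStructure_surjective [FiniteDimensional ℂ E] (hC : IsNondegSymmBilin C)
    (hh : IsHermitianMetric h) (hκ : ∀ u v, C (κ u) v = h v u) : Function.Surjective κ := by
  let K := realStructure hC hh hκ
  have hKK : Function.Injective (K ∘ₛₗ K) :=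
    (realStructure_injective hh hκ).comp (realStructure_injective hh hκ)
  exact Function.Surjective.of_comp (LinearMap.injective_iff_surjective.mp hKK)

theorem realStructure_antiunitary (hh : IsHermitianMetric h) (hκ : ∀ u v, C (κ u) v = h v u)
    (hcompat : Compatible h C) (a b : E) : h (κ a) (κ b) = h b a := by
  have hPsi : Function.Injective (PsiH h) := fun _ _ hxy => hh.eq_of_forall_right (congrFun hxy)
  have hinv (a : E) : Function.invFun (PsiH h) (C (κ a)) = a := by
    rw [show C (κ a) = PsiH h a from funext (hκ a)]
    exact Function.leftInverse_invFun hPsi a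
  have := hcompat (κ a) (κ b)
  rwa [dualMetric, hinv, hinv, eq_comm] at this

theorem realStructure_involutive [FiniteDimensional ℂ E] (hC : IsNondegSymmBilin C)
    (hh : IsHermitianMetric h) (hκ : ∀ u v, C (κ u) v = h v u) (hcompat : Compatible h C) :
    Function.Involutive κ := fun a => hC.eq_of_forall_left fun v => by
  obtain ⟨b, rfl⟩ := realStructure_surjective hC hh hκ v
  rw [hκ, realStructure_antiunitary hh hκ hcompat, hC.2.2.1, hκ]

theorem realStructure_eq_comp {κ' s : E → E} (hC : IsNondegSymmBilin C)
    (hκ : ∀ u v, C (κ u) v = h v u) (hκ' : ∀ u v, C (κ' u) v = h' v u)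
    (hs : ∀ u v, h' u v = h (s u) v) (hs_symm : IsSymmetricWrt h s) (u : E) :
    κ' u = κ (s u) :=
  hC.eq_of_forall_left fun v => by rw [hκ', hs, hs_symm, hκ]

end RealStructure

theorem IsSymmetricWrt.exists_eigenvector_of_ne_zero [FiniteDimensional ℂ E]
    (hh : IsHermitianMetric h) {D : E →ₗ[ℂ] E} (hD : IsSymmetricWrt h D) (hD0 : D ≠ 0) :
    ∃ μ : ℂ, μ ≠ 0 ∧ ∃ w : E, w ≠ 0 ∧ D w = μ • w := by
  -- an eigenvector inside `range D` cannot lie in `ker D`, since `ker D ∩ range D = 0`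
  have : Nontrivial (LinearMap.range D) :=
    Submodule.nontrivial_iff_ne_bot.mpr (LinearMap.range_eq_bot.not.mpr hD0)
  obtain ⟨μ, hμ⟩ := Module.End.exists_eigenvalue
    (D.restrict fun x (_ : x ∈ LinearMap.range D) => LinearMap.mem_range_self D x)
  obtain ⟨⟨w, x, rfl⟩, hw⟩ := hμ.exists_hasEigenvector
  have hDw : D (D x) = μ • D x := congrArg Subtype.val hw.apply_eq_smul
  have hw0 : D x ≠ 0 := fun h0 => hw.2 (Subtype.ext h0)
  refine ⟨μ, fun hμ0 => hw0 (hh.eq_zero_of_self_eq_zero ?_), D x, hw0, hDw⟩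
  rw [hD, hDw, hμ0, zero_smul, ← sub_self (0 : E), hh.sub_right, sub_self]

theorem IsSymmetricWrt.conj_eigenvalue (hh : IsHermitianMetric h) {D : E → E}
    (hD : IsSymmetricWrt h D) {μ : ℂ} {w : E} (hw : w ≠ 0) (hDw : D w = μ • w) :
    starRingEnd ℂ μ = μ := by
  have : μ * h w w = starRingEnd ℂ μ * h w w := by
    rw [← hh.2.1, ← hDw, hD, hDw, hh.smul_right]
  exact (mul_right_cancel₀ (fun h0 => hw (hh.eq_zero_of_self_eq_zero h0)) this).symm

theorem IsPosDefWrt.eq_of_comp_self_eq [FiniteDimensional ℂ E] (hh : IsHermitianMetric h)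
    {q r : E →ₗ[ℂ] E} (hq : IsPosDefWrt h q) (hr : IsPosDefWrt h r)
    (hqr : ∀ v, q (q v) = r (r v)) : q = r := by
  by_contra hne
  have hD : IsSymmetricWrt h (q - r : E →ₗ[ℂ] E) := fun u v => by
    simp only [LinearMap.sub_apply, hh.sub_left, hh.sub_right, hq.1 u v, hr.1 u v]
  obtain ⟨μ, hμ, w, hw, hDw⟩ := hD.exists_eigenvector_of_ne_zero hh (sub_ne_zero.mpr hne)
  have hμ_real := hD.conj_eigenvalue hh hw hDw
  -- `q - r` anticommutes with `q + r` because `q² = r²`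
  have hanti : (q - r) (q w + r w) = -μ • (q w + r w) := by
    have : q ((q - r) w) + r ((q - r) w) = μ • (q w + r w) := by
      rw [hDw, map_smul, map_smul, smul_add]
    rw [neg_smul, ← this]
    simp only [LinearMap.sub_apply, map_add, map_sub, hqr]
    abel
  have hzero : μ * h w (q w + r w) = 0 := by
    have h1 : h ((q - r) w) (q w + r w) = μ * h w (q w + r w) := by rw [hDw, hh.2.1]
    have h2 : h ((q - r) w) (q w + r w) = -μ * h w (q w + r w) := by
      rw [hD, hanti, hh.smul_right, map_neg, hμ_real]
    linear_combination (h2 - h1) / 2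
  have hpos : 0 < (h (q w + r w) w).re := by
    rw [hh.1, Complex.add_re]
    exact add_pos (hq.2 w hw) (hr.2 w hw)
  rw [hh.2.2.1, (mul_eq_zero.mp hzero).resolve_left hμ, map_zero, Complex.zero_re] at hpos
  exact lt_irrefl 0 hpos

theorem IsPosDefWrt.conj_antiunitary (hh : IsHermitianMetric h) {f : E →ₗ[ℂ] E}
    (hf : IsPosDefWrt h f) (K : E →ₗ⋆[ℂ] E) (hK : ∀ a b, h (K a) (K b) = h b a)
    (hKK : Function.Involutive K) : IsPosDefWrt h (K ∘ₛₗ f ∘ₛₗ K) := by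
  refine ⟨fun u v => ?_, fun v hv => ?_⟩
  · calc h (K (f (K u))) v = h (K (f (K u))) (K (K v)) := by rw [hKK]
      _ = h (f (K v)) (K u) := by rw [hK, hf.1]
      _ = h u (K (f (K v))) := by rw [← hK, hKK]
  · have hKv : K v ≠ 0 := fun h0 => hv (by rw [← hKK v, h0, map_zero])
    have : h (K (f (K v))) v = starRingEnd ℂ (h (f (K v)) (K v)) := by
      rw [← hKK v, hK, hKK, ← hh.2.2.1]
    simpa [this] using hf.2 (K v) hKv

theorem IsPosDefWrt.comp_comp_of_injective {t r : E →ₗ[ℂ] E} (ht : IsPosDefWrt h t)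
    (hr : IsSymmetricWrt h r) (hr_inj : Function.Injective r) :
    IsPosDefWrt h (r ∘ₗ t ∘ₗ r) := by
  refine ⟨fun u v => ?_, fun v hv => ?_⟩
  · simp only [LinearMap.comp_apply, hr _ v, ht.1 _ (r v), hr u]
  · simp only [LinearMap.comp_apply, hr _ v]
    exact ht.2 (r v) ((map_ne_zero_iff r hr_inj).mpr hv)

theorem apply_conj_apply_of_comp_self_eq [FiniteDimensional ℂ E] (hh : IsHermitianMetric h)
    (K : E →ₗ⋆[ℂ] E) (hK : ∀ a b, h (K a) (K b) = h b a) (hKK : Function.Involutive K)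
    (s : E →ₗ[ℂ] E) (hKs : Function.Involutive (K ∘ s)) {r : E →ₗ[ℂ] E}
    (hr : IsPosDefWrt h r) (hrs : ∀ v, r (r v) = s v) (v : E) : r (K (r v)) = K v := by
  have hr_inj : Function.Injective r := by
    apply Function.Injective.of_comp (f := r)
    rw [show ⇑r ∘ ⇑r = ⇑s from funext hrs]
    exact hKs.injective.of_comp
  have hsKsK (x : E) : s (K (s (K x))) = x := by
    have := congrArg K (hKs (K x))
    rwa [Function.comp_apply, Function.comp_apply, hKK, hKK] at this
  have hrs_comm (x : E) : r (s x) = s (r x) := by rw [← hrs x, hrs (r x)]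
  -- `K s K = s⁻¹` commutes with `r` because `s` does
  have hr_KsK (x : E) : r (K (s (K x))) = K (s (K (r x))) :=
    calc r (K (s (K x))) = K (s (K (s (r (K (s (K x))))))) := (hKs _).symm
      _ = K (s (K (r x))) := by rw [← hrs_comm, hsKsK]
  set t : E →ₗ[ℂ] E := K ∘ₛₗ r ∘ₛₗ K
  have htst (x : E) : t (s (t x)) = x := by
    change K (r (K (s (K (r (K x)))))) = x
    rw [hr_KsK, hKK, hrs, hsKsK]
  have hQ : r ∘ₗ t ∘ₗ r = r :=
    (hr.conj_antiunitary hh K hK hKK |>.comp_comp_of_injective hr.1 hr_inj).eq_of_comp_self_eq hh hr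
      fun x => show r (t (r (r (t (r x))))) = r (r x) by rw [hrs, htst]
  have htr : K (r (K (r v))) = v := hr_inj (LinearMap.congr_fun hQ v)
  rw [← hKK (r (K (r v))), htr]

end HermitianForms

/-- Let `h, h'` be Hermitian metrics both compatible with `C`, with real structures
`κ, κ'` (so `C(κ u, v) = h(v,u)` and `C(κ' u, v) = h'(v,u)`).  Let `s := s(h,h')` be
the unique automorphism with `h'(u,v) = h(s u, v)` and let `r := s^{1/2}` be its
unique positive `h`-self-adjoint square root.  Then (1) `r` is a `C`-isometry;
(2) `r ∘ κ' = κ ∘ r`; (3) `r` maps the fixed-point set of `κ'` bijectively onto the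
fixed-point set of `κ`, isometrically with respect to the restrictions of `C`. -/
theorem sqrt_s_isometry_and_real_structures
    (h h' C : V → V → ℂ) (hh : IsHermitianMetric h) (hh' : IsHermitianMetric h')
    (hC : IsNondegSymmBilin C) (hcompat : Compatible h C) (hcompat' : Compatible h' C)
    (κ κ' : V → V) (hκ : ∀ u v : V, C (κ u) v = h v u)
    (hκ' : ∀ u v : V, C (κ' u) v = h' v u)
    (s : V ≃ₗ[ℂ] V) (hs : ∀ u v : V, h' u v = h (s u) v)
    (r : V →ₗ[ℂ] V) (hrsq : ∀ v : V, r (r v) = s v)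
    (hrsa : ∀ u v : V, h (r u) v = h u (r v))
    (hrpos : ∀ v : V, v ≠ 0 → 0 < (h (r v) v).re) :
    (∀ u v : V, C (r u) (r v) = C u v) ∧
    (∀ v : V, r (κ' v) = κ (r v)) ∧
    Set.BijOn (⇑r) {v : V | κ' v = v} {v : V | κ v = v} ∧
    (∀ u ∈ {v : V | κ' v = v}, ∀ w ∈ {v : V | κ' v = v}, C (r u) (r w) = C u w) := by
  have hκκ := realStructure_involutive hC hh hκ hcompat
  have hκκ' := realStructure_involutive hC hh' hκ' hcompat'
  have hκ's := realStructure_eq_comp hC hκ hκ' hs (hh.isSymmetricWrt_of_apply_eq hh' hs)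
  have hrκr : ∀ v, r (κ (r v)) = κ v :=
    apply_conj_apply_of_comp_self_eq hh (realStructure hC hh hκ)
      (realStructure_antiunitary hh hκ hcompat) hκκ s
      (fun v => show κ (s (κ (s v))) = v by rw [← hκ's, ← hκ's, hκκ']) ⟨hrsa, hrpos⟩ hrsq
  have hr_semiconj : Function.Semiconj r κ' κ := fun v => by rw [hκ's, ← hrsq, hrκr]
  have hr_bij : Function.Bijective r := by
    have hrr : ⇑r ∘ ⇑r = ⇑s := funext hrsq
    exact ⟨.of_comp (f := r) (hrr ▸ s.injective), .of_comp (g := r) (hrr ▸ s.surjective)⟩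
  have hr_isom := isometry_of_apply_conj_apply hκ hκκ hrsa hrκr
  exact ⟨hr_isom, hr_semiconj, hr_semiconj.bijOn_fixedPoints hr_bij,
    fun u _ w _ => hr_isom u w⟩
end
end

section
/- For every positive integer n and all positive reals c₀, c₁ there exists B > 0 such that the following holds: for every n×n complex matrix K with Kᵀ K = I_n and all complex numbers α_1, …, α_n with |α_k| ≤ c₀ for all k and |α_i − α_j| ≥ c₁ for all i ≠ j, letting Γ = diag(α_1, …, α_n), one has ‖K Kᴴ‖ + ‖(K Kᴴ)^{-1}‖ ≤ B · (1 + ‖Kᵀ Γ K‖)ⁿ, where ‖·‖ denotes the ℓ²-operator norm on n×n complex matrices. -/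
/-!
Put `F = Kᵀ Γ K` and let `rₖ` be the `k`-th row of `K`. Since `K Kᵀ = 1`, the map
`d ↦ Kᵀ (diag d) K` is an algebra homomorphism, and it sends the `k`-th Lagrange polynomial
`∏_{j ≠ k} (Γ - αⱼ)` to `∏_{j ≠ k} (αₖ - αⱼ) • rₖ rₖᵀ`. Comparing norms, using that the rank-one
matrix `rₖ rₖᵀ` has norm `‖rₖ‖²`, gives `c₁ⁿ⁻¹ ‖rₖ‖² ≤ (‖F‖ + c₀)ⁿ⁻¹`. Summing over `k` bounds the
Frobenius norm of `K`, which dominates both `‖K Kᴴ‖ = ‖K‖²` and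
`‖(K Kᴴ)⁻¹‖ = ‖K̄ Kᵀ‖ = ‖Kᵀ‖²`.
-/

open Matrix

noncomputable section

/-- The `ℓ²`-operator norm of a complex square matrix, i.e. the operator norm of the
induced linear map on the Euclidean space `ℂⁿ`. -/
def l2OpNorm {n : ℕ} (A : Matrix (Fin n) (Fin n) ℂ) : ℝ :=
  ‖(Matrix.toEuclideanCLM (𝕜 := ℂ) A :
      EuclideanSpace ℂ (Fin n) →L[ℂ] EuclideanSpace ℂ (Fin n))‖

open scoped Matrix.Norms.L2Operator

lemma EuclideanSpace.norm_toLp_star {𝕜 n : Type*} [RCLike 𝕜] [Fintype n] (x : n → 𝕜) :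
    ‖WithLp.toLp 2 (star x)‖ = ‖WithLp.toLp 2 x‖ := by
  simp [EuclideanSpace.norm_eq]

lemma MonoidHom.norm_map_prod_le {ι M A : Type*} [CommMonoid M] [SeminormedRing A]
    [NormOneClass A] (φ : M →* A) (s : Finset ι) (g : ι → M) :
    ‖φ (∏ i ∈ s, g i)‖ ≤ ∏ i ∈ s, ‖φ (g i)‖ := by
  classical
  induction s using Finset.induction_on with
  | empty => simp
  | insert a s ha ih =>
    rw [Finset.prod_insert ha, Finset.prod_insert ha, map_mul]
    exact (norm_mul_le _ _).trans (by gcongr)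

lemma Finset.prod_erase_sub_algebraMap {R n : Type*} [CommRing R] [Fintype n] [DecidableEq n]
    (α : n → R) (k : n) :
    ∏ j ∈ univ.erase k, (α - algebraMap R (n → R) (α j)) =
      Pi.single k (∏ j ∈ univ.erase k, (α k - α j)) := by
  funext i
  rw [Finset.prod_apply]
  rcases eq_or_ne i k with rfl | hik
  · simp
  · rw [Pi.single_eq_of_ne hik]
    exact prod_eq_zero (mem_erase.mpr ⟨hik, mem_univ i⟩) (by simp)

namespace Matrix

section Orthogonal

variable {R n : Type*} [CommRing R] [Fintype n] [DecidableEq n]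

def orthogonalConjDiagonal (K : Matrix n n R) (hK : Kᵀ * K = 1) :
    (n → R) →ₐ[R] Matrix n n R where
  toFun d := Kᵀ * diagonal d * K
  map_one' := by simp [hK]
  map_mul' a b := by
    change Kᵀ * diagonal (fun i => a i * b i) * K = _
    rw [← diagonal_mul_diagonal]
    calc Kᵀ * (diagonal a * diagonal b) * K = Kᵀ * diagonal a * (K * Kᵀ) * diagonal b * K := by
          rw [mul_eq_one_comm.mp hK, Matrix.mul_one]; noncomm_ring
      _ = _ := by noncomm_ring
  map_zero' := by
    change Kᵀ * diagonal 0 * K = 0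
    simp
  map_add' a b := by
    change Kᵀ * diagonal (fun i => a i + b i) * K = Kᵀ * diagonal a * K + Kᵀ * diagonal b * K
    rw [← diagonal_add, Matrix.mul_add, Matrix.add_mul]
  commutes' c := by
    change Kᵀ * diagonal (fun _ => c) * K = diagonal (fun _ => c)
    rw [← smul_one_eq_diagonal, Matrix.mul_smul, Matrix.mul_one, Matrix.smul_mul, hK]

lemma orthogonalConjDiagonal_apply (K : Matrix n n R) (hK : Kᵀ * K = 1) (d : n → R) :
    orthogonalConjDiagonal K hK d = Kᵀ * diagonal d * K := rfl

lemma orthogonalConjDiagonal_single (K : Matrix n n R) (hK : Kᵀ * K = 1) (k : n) (c : R) :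
    orthogonalConjDiagonal K hK (Pi.single k c) = c • vecMulVec (K k) (K k) := by
  ext i j
  simp only [orthogonalConjDiagonal_apply, mul_apply, transpose_apply, diagonal_apply,
    Pi.single_apply, mul_ite, mul_zero, Finset.sum_ite_eq', Finset.mem_univ, ↓reduceIte, ite_mul,
    zero_mul, smul_apply, vecMulVec_apply, smul_eq_mul]
  ring

lemma inv_mul_conjTranspose_eq [StarRing R] (K : Matrix n n R) (hK : Kᵀ * K = 1) :
    (K * Kᴴ)⁻¹ = Kᵀᴴ * Kᵀ := by
  refine inv_eq_right_inv ?_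
  rw [Matrix.mul_assoc, ← Matrix.mul_assoc Kᴴ, ← conjTranspose_mul, hK, conjTranspose_one,
    Matrix.one_mul, mul_eq_one_comm.mp hK]

end Orthogonal

variable {𝕜 : Type*} [RCLike 𝕜] {m n : Type*} [Fintype m] [Fintype n] [DecidableEq n]

lemma l2_opNorm_vecMulVec (x : m → 𝕜) (y : n → 𝕜) :
    ‖vecMulVec x y‖ = ‖WithLp.toLp 2 x‖ * ‖WithLp.toLp 2 y‖ := by
  rw [← EuclideanSpace.norm_toLp_star y, ← InnerProductSpace.norm_rankOne (𝕜 := 𝕜),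
    l2_opNorm_def, ← star_star y, ← InnerProductSpace.symm_toEuclideanLin_rankOne, star_star,
    LinearEquiv.trans_apply, LinearEquiv.apply_symm_apply]
  rfl

omit [Fintype n] [DecidableEq n] in
lemma conjTranspose_mul_self_eq_sum_vecMulVec (A : Matrix m n 𝕜) :
    Aᴴ * A = ∑ i, vecMulVec (star (A i)) (A i) := by
  ext j k
  simp [mul_apply, vecMulVec_apply, sum_apply]

lemma l2_opNorm_sq_le_sum_norm_sq (A : Matrix m n 𝕜) :
    ‖A‖ ^ 2 ≤ ∑ i, ∑ j, ‖A i j‖ ^ 2 := by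
  rw [sq, ← l2_opNorm_conjTranspose_mul_self, conjTranspose_mul_self_eq_sum_vecMulVec]
  refine (norm_sum_le _ _).trans_eq (Finset.sum_congr rfl fun i _ => ?_)
  rw [l2_opNorm_vecMulVec, EuclideanSpace.norm_toLp_star, ← sq, EuclideanSpace.norm_sq_eq]

lemma l2_opNorm_mul_conjTranspose_add_norm_inv_le (K : Matrix n n 𝕜) (hK : Kᵀ * K = 1) :
    ‖K * Kᴴ‖ + ‖(K * Kᴴ)⁻¹‖ ≤ 2 * ∑ i, ∑ j, ‖K i j‖ ^ 2 := by
  have hgram : ‖K * Kᴴ‖ ≤ ∑ i, ∑ j, ‖K i j‖ ^ 2 := by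
    rw [← star_eq_conjTranspose, CStarRing.norm_self_mul_star, ← sq]
    exact l2_opNorm_sq_le_sum_norm_sq K
  have hinv : ‖(K * Kᴴ)⁻¹‖ ≤ ∑ i, ∑ j, ‖K i j‖ ^ 2 := by
    rw [inv_mul_conjTranspose_eq K hK, l2_opNorm_conjTranspose_mul_self, ← sq]
    exact (l2_opNorm_sq_le_sum_norm_sq Kᵀ).trans_eq Finset.sum_comm
  linarith

section SeparatedSpectrum

variable [Nonempty n] (K : Matrix n n 𝕜) (hK : Kᵀ * K = 1) {α : n → 𝕜} {c₀ c₁ : ℝ}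
  (hc₁ : 0 < c₁) (hα : ∀ k, ‖α k‖ ≤ c₀) (hgap : ∀ i j, i ≠ j → c₁ ≤ ‖α i - α j‖)
include hK hc₁ hα hgap

theorem norm_sq_row_le_of_transpose_mul_self_eq_one (k : n) :
    ‖WithLp.toLp 2 (K k)‖ ^ 2 ≤
      ((‖Kᵀ * diagonal α * K‖ + c₀) / c₁) ^ (Fintype.card n - 1) := by
  set φ := orthogonalConjDiagonal K hK
  set p := ∏ j ∈ Finset.univ.erase k, (α k - α j)
  have hcard : (Finset.univ.erase k).card = Fintype.card n - 1 := by
    rw [Finset.card_erase_of_mem (Finset.mem_univ k), Finset.card_univ]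
  have hp : c₁ ^ (Fintype.card n - 1) ≤ ‖p‖ := by
    rw [norm_prod, ← hcard, ← Finset.prod_const]
    exact Finset.prod_le_prod (fun _ _ => hc₁.le)
      fun j hj => hgap k j (Finset.ne_of_mem_erase hj).symm
  have hfactor (j : n) :
      ‖φ (α - algebraMap 𝕜 (n → 𝕜) (α j))‖ ≤ ‖Kᵀ * diagonal α * K‖ + c₀ := by
    rw [map_sub, AlgHom.commutes]
    exact (norm_sub_le _ _).trans
      (add_le_add le_rfl ((norm_algebraMap' _ _).trans_le (hα j)))
  have hlagrange : φ (∏ j ∈ Finset.univ.erase k, (α - algebraMap 𝕜 (n → 𝕜) (α j))) =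
      p • vecMulVec (K k) (K k) := by
    rw [Finset.prod_erase_sub_algebraMap, orthogonalConjDiagonal_single]
  rw [div_pow, le_div_iff₀ (by positivity)]
  calc ‖WithLp.toLp 2 (K k)‖ ^ 2 * c₁ ^ (Fintype.card n - 1)
      ≤ ‖WithLp.toLp 2 (K k)‖ ^ 2 * ‖p‖ := by gcongr
    _ = ‖φ (∏ j ∈ Finset.univ.erase k, (α - algebraMap 𝕜 (n → 𝕜) (α j)))‖ := by
      rw [hlagrange, norm_smul, l2_opNorm_vecMulVec, sq, mul_comm]
    _ ≤ ∏ j ∈ Finset.univ.erase k, ‖φ (α - algebraMap 𝕜 (n → 𝕜) (α j))‖ :=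
      MonoidHom.norm_map_prod_le (φ : (n → 𝕜) →* Matrix n n 𝕜) _ _
    _ ≤ (‖Kᵀ * diagonal α * K‖ + c₀) ^ (Fintype.card n - 1) := by
      rw [← hcard, ← Finset.prod_const]
      exact Finset.prod_le_prod (fun _ _ => norm_nonneg _) fun j _ => hfactor j

theorem sum_norm_sq_le_of_transpose_mul_self_eq_one :
    ∑ i, ∑ j, ‖K i j‖ ^ 2 ≤
      Fintype.card n * ((‖Kᵀ * diagonal α * K‖ + c₀) / c₁) ^ (Fintype.card n - 1) := by
  calc ∑ i, ∑ j, ‖K i j‖ ^ 2 = ∑ i, ‖WithLp.toLp 2 (K i)‖ ^ 2 :=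
        Finset.sum_congr rfl fun i _ => (EuclideanSpace.norm_sq_eq (WithLp.toLp 2 (K i))).symm
    _ ≤ ∑ _i : n, ((‖Kᵀ * diagonal α * K‖ + c₀) / c₁) ^ (Fintype.card n - 1) :=
        Finset.sum_le_sum fun i _ =>
          norm_sq_row_le_of_transpose_mul_self_eq_one K hK hc₁ hα hgap i
    _ = _ := by simp

end SeparatedSpectrum

end Matrix

lemma l2OpNorm_eq_norm {n : ℕ} (A : Matrix (Fin n) (Fin n) ℂ) : l2OpNorm A = ‖A‖ := rfl

/-- For every `n > 0` and positive reals `c₀, c₁` there is `B > 0` such that for any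
complex orthogonal matrix `K` (`Kᵀ K = 1`) and any `α : Fin n → ℂ` with `|α k| ≤ c₀`
and `|α i - α j| ≥ c₁` for `i ≠ j`, putting `Γ = diag α`, one has
`‖K Kᴴ‖ + ‖(K Kᴴ)⁻¹‖ ≤ B (1 + ‖Kᵀ Γ K‖)ⁿ` in the `ℓ²`-operator norm. -/
theorem exists_bound_orthogonal_gram (n : ℕ) (hn : 0 < n) (c₀ c₁ : ℝ)
    (hc₀ : 0 < c₀) (hc₁ : 0 < c₁) :
    ∃ B > (0 : ℝ), ∀ (K : Matrix (Fin n) (Fin n) ℂ) (α : Fin n → ℂ),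
      Kᵀ * K = 1 → (∀ k, ‖α k‖ ≤ c₀) → (∀ i j, i ≠ j → c₁ ≤ ‖α i - α j‖) →
      l2OpNorm (K * Kᴴ) + l2OpNorm ((K * Kᴴ)⁻¹) ≤
        B * (1 + l2OpNorm (Kᵀ * Matrix.diagonal α * K)) ^ n := by
  have : Nonempty (Fin n) := ⟨⟨0, hn⟩⟩
  refine ⟨2 * n * ((1 + c₀) / c₁) ^ (n - 1), by positivity, fun K α hK hα hgap => ?_⟩
  simp only [l2OpNorm_eq_norm]
  set t := ‖Kᵀ * diagonal α * K‖
  have ht : 0 ≤ t := norm_nonneg _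
  have hsum := sum_norm_sq_le_of_transpose_mul_self_eq_one K hK hc₁ hα hgap
  rw [Fintype.card_fin] at hsum
  have hbase : (t + c₀) / c₁ ≤ (1 + c₀) / c₁ * (1 + t) := by
    rw [div_mul_eq_mul_div]
    gcongr
    nlinarith
  calc ‖K * Kᴴ‖ + ‖(K * Kᴴ)⁻¹‖ ≤ 2 * (n * ((t + c₀) / c₁) ^ (n - 1)) :=
        (l2_opNorm_mul_conjTranspose_add_norm_inv_le K hK).trans (by gcongr)
    _ ≤ 2 * n * (((1 + c₀) / c₁) ^ (n - 1) * (1 + t) ^ (n - 1)) := by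
        rw [← mul_pow, mul_assoc]
        gcongr
    _ ≤ 2 * n * ((1 + c₀) / c₁) ^ (n - 1) * (1 + t) ^ n := by
        rw [← mul_assoc]
        gcongr
        · linarith
        · omega
end
end

section
/- Let V be a finite-dimensional complex vector space, ω a symplectic (non-degenerate alternating) ℂ-bilinear form on V, and h a Hermitian metric on V. Let κ be the conjugate-linear endomorphism of V determined by ω(u, κ(v)) = h(u, v) for all u, v ∈ V. Then h is compatible with ω (i.e. Ψ_ω is an isometry with respect to h and h^∨) if and only if κ ∘ κ = −id_V; and in that case h(κ(u), κ(v)) = conj(h(u,v)) for all u, v ∈ V. -/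
noncomputable section

variable {V : Type*} [AddCommGroup V] [Module ℂ V] [FiniteDimensional ℂ V]

/-- `ω` is a symplectic (non-degenerate alternating) `ℂ`-bilinear form on `V`. -/
def IsSymplecticForm (ω : V → V → ℂ) : Prop :=
  (∀ u v w : V, ω (u + v) w = ω u w + ω v w) ∧
  (∀ (a : ℂ) (u v : V), ω (a • u) v = a * ω u v) ∧
  (∀ u v w : V, ω u (v + w) = ω u v + ω u w) ∧
  (∀ (a : ℂ) (u v : V), ω u (a • v) = a * ω u v) ∧
  (∀ v : V, ω v v = 0) ∧
  (∀ v : V, (∀ u : V, ω v u = 0) → v = 0)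

/-- Let `ω` be a symplectic form and `h` a Hermitian metric on `V`, and let `κ` be
the conjugate-linear endomorphism determined by `ω(u, κ(v)) = h(u, v)`.  Then `h` is
compatible with `ω` (i.e. `Ψ_ω` is isometric for `h` and `h^∨`) iff `κ ∘ κ = -id`;
and in that case `h(κ u, κ v) = conj (h u v)` for all `u, v`. -/
theorem compatible_symplectic_iff_quaternionic
    (h ω : V → V → ℂ) (hh : IsHermitianMetric h) (hω : IsSymplecticForm ω)
    (κ : V → V) (hκ : ∀ u v : V, ω u (κ v) = h u v) :
    (Compatible h ω ↔ ∀ v : V, κ (κ v) = -v) ∧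
    (Compatible h ω → ∀ u v : V, h (κ u) (κ v) = starRingEnd ℂ (h u v)) := by
  obtain ⟨hadd, hsmul, hsym, hpos⟩ := hh
  obtain ⟨ωa1, ωs1, ωa2, ωs2, ωalt, ωnd⟩ := hω
  -- basic facts about h
  have h0l : ∀ v : V, h 0 v = 0 := by
    intro v
    have := hsmul 0 v v
    simpa using this
  have haddr : ∀ u v w : V, h u (v + w) = h u v + h u w := by
    intro u v w
    rw [hsym u (v + w), hadd, map_add, ← hsym u v, ← hsym u w]
  have hsmulr : ∀ (a : ℂ) (u v : V), h u (a • v) = starRingEnd ℂ a * h u v := by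
    intro a u v
    rw [hsym u (a • v), hsmul, map_mul, ← hsym u v]
  have hnegr : ∀ u v : V, h u (-v) = -h u v := by
    intro u v
    have := hsmulr (-1) u v
    simpa using this
  have hcancel : ∀ x y : V, (∀ u : V, h u x = h u y) → x = y := by
    intro x y hxy
    by_contra hne
    have hd : x - y ≠ 0 := sub_ne_zero.mpr hne
    have hz : h (x - y) (x - y) = 0 := by
      rw [sub_eq_add_neg x y, haddr, hnegr, hxy (x + -y)]
      ring
    have := hpos _ hd
    rw [hz] at this
    simp at this
  -- basic facts about ω
  have ω0r : ∀ u : V, ω u 0 = 0 := by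
    intro u
    have := ωs2 0 u u
    simpa using this
  have ωnegr : ∀ u v : V, ω u (-v) = -ω u v := by
    intro u v
    have := ωs2 (-1) u v
    simpa using this
  have ωanti : ∀ u v : V, ω u v = -ω v u := by
    intro u v
    have h1 := ωalt (u + v)
    rw [ωa1, ωa2, ωa2, ωalt u, ωalt v] at h1
    linear_combination h1
  have ωsubr : ∀ (u x y : V), ω u (x - y) = ω u x - ω u y := by
    intro u x y
    rw [sub_eq_add_neg, ωa2, ωnegr, sub_eq_add_neg]
  have ωcancelr : ∀ x y : V, (∀ u : V, ω u x = ω u y) → x = y := by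
    intro x y hxy
    have hz : x - y = 0 := by
      apply ωnd
      intro u
      have h2 : ω u (x - y) = 0 := by rw [ωsubr, hxy u, sub_self]
      rw [ωanti, h2, neg_zero]
    exact sub_eq_zero.mp hz
  -- κ is additive and ℝ-linear
  have κadd : ∀ x y : V, κ (x + y) = κ x + κ y := by
    intro x y
    apply ωcancelr
    intro u
    rw [hκ, haddr, ωa2, hκ, hκ]
  have κsmulR : ∀ (r : ℝ) (x : V), κ (r • x) = r • κ x := by
    intro r x
    apply ωcancelr
    intro u
    rw [hκ, ← Complex.coe_smul r x, hsmulr, ← Complex.coe_smul r (κ x), ωs2, hκ]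
    simp [Complex.conj_ofReal]
  have κinj : Function.Injective κ := by
    intro x y hxy
    apply hcancel
    intro u
    rw [← hκ, ← hκ, hxy]
  have κsurj : Function.Surjective κ := by
    let κL : V →ₗ[ℝ] V :=
      { toFun := κ
        map_add' := κadd
        map_smul' := κsmulR }
    have : Function.Injective κL := κinj
    exact LinearMap.injective_iff_surjective.mp this
  -- the key computation of invFun (PsiH h)
  have hPsiInj : Function.Injective (PsiH h) := by
    intro a b hab
    apply hcancel
    intro w
    exact congrFun hab w
  have key : ∀ u x : V, κ x = -u → Function.invFun (PsiH h) (ω u) = x := by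
    intro u x hx
    have hmem : PsiH h x = ω u := by
      funext w
      show h w x = ω u w
      rw [← hκ w x, hx, ωnegr, ωanti u w]
    have h2 : PsiH h (Function.invFun (PsiH h) (ω u)) = ω u :=
      Function.invFun_eq ⟨x, hmem⟩
    exact hPsiInj (h2.trans hmem.symm)
  -- forward direction
  have fwd : Compatible h ω → ∀ v : V, κ (κ v) = -v := by
    intro hc v
    obtain ⟨xv, hxv⟩ := κsurj (-v)
    have hx : xv = κ v := by
      apply ωcancelr
      intro u
      obtain ⟨xu, hxu⟩ := κsurj (-u)
      have hcuv := hc u v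
      simp only [dualMetric] at hcuv
      rw [key v xv hxv, key u xu hxu] at hcuv
      rw [← hκ xv xu, hxu, ωnegr, ← hκ u v] at hcuv
      calc ω u xv = -ω xv u := ωanti u xv
        _ = ω u (κ v) := hcuv
    rw [← hx]
    exact hxv
  -- backward direction
  have bwd : (∀ v : V, κ (κ v) = -v) → Compatible h ω := by
    intro hq u v
    simp only [dualMetric]
    rw [key u (κ u) (hq u), key v (κ v) (hq v)]
    rw [← hκ (κ v) (κ u), hq u, ωnegr, ← hκ u v]
    exact (ωanti u (κ v)).symm
  refine ⟨⟨fwd, bwd⟩, ?_⟩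
  intro hc u v
  have hq := fwd hc
  rw [← hκ (κ u) (κ v), hq v, ωnegr,
    show (starRingEnd ℂ) (h u v) = h v u from (hsym v u).symm, ← hκ v u]
  exact (ωanti v (κ u)).symm
end
end
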